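/- arXiv:1906.05730 — 8 statements merged into one kernel-verified Lean document; each statement's English description precedes it below -/
import Mathlib

section
/- Every nonnegative n×m real matrix A without zero columns admits an exact factorization A = FV into nonnegative matrices F (n×d) and V (d×m), where d equals the number of vertices of the convex polytope generated by the range of the basic function of a maximal linearly independent set of rows of A. -/
theorem exists_nonneg_factorization {n m r : ℕ}
    (A : Matrix (Fin n) (Fin m) ℝ) (hA : ∀ i j, 0 ≤ A i j)
    (hcol : ∀ j, ∃ i, A i j ≠ 0)
    (y : Fin r → Fin m → ℝ) (hrows : ∀ k, ∃ i, y k = A i)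
    (hind : LinearIndependent ℝ y)
    (hmax : ∀ i, A i ∈ Submodule.span ℝ (Set.range y))
    (β : Fin m → Fin r → ℝ) (hβ : ∀ i k, β i k = y k i / ∑ k', y k' i)
    (d : ℕ)
    (hd : d = ((convexHull ℝ (Set.range β)).extremePoints ℝ).ncard) :
    ∃ (F : Matrix (Fin n) (Fin d) ℝ) (V : Matrix (Fin d) (Fin m) ℝ),
      (∀ i j, 0 ≤ F i j) ∧ (∀ i j, 0 ≤ V i j) ∧ A = F * V := by
  classical
  -- basic nonnegativity of the rows y
  have hy0 : ∀ k j, 0 ≤ y k j := by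
    intro k j
    obtain ⟨i, hi⟩ := hrows k
    rw [hi]; exact hA i j
  set S : Fin m → ℝ := fun j => ∑ k', y k' j with hS
  -- coefficients expressing each row of A in terms of y
  have hc : ∀ i, ∃ c : Fin r → ℝ, ∑ k, c k • y k = A i := by
    intro i
    exact (Submodule.mem_span_range_iff_exists_fun ℝ).mp (hmax i)
  choose c hc using hc
  have hAeval : ∀ i j, A i j = ∑ k, c i k * y k j := by
    intro i j
    have := congrFun (hc i) j
    simp only [Finset.sum_apply, Pi.smul_apply, smul_eq_mul] at this
    exact this.symm
  -- positivity of S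
  have hSpos : ∀ j, 0 < S j := by
    intro j
    obtain ⟨i, hi⟩ := hcol j
    have hne : ∃ k, y k j ≠ 0 := by
      by_contra h
      push_neg at h
      apply hi
      rw [hAeval i j]
      simp [h]
    obtain ⟨k, hk⟩ := hne
    have : 0 < y k j := lt_of_le_of_ne (hy0 k j) (Ne.symm hk)
    exact Finset.sum_pos' (fun k' _ => hy0 k' j) ⟨k, Finset.mem_univ k, this⟩
  -- the extreme point set
  set K : Set (Fin r → ℝ) := convexHull ℝ (Set.range β) with hK
  set E : Set (Fin r → ℝ) := K.extremePoints ℝ with hE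
  have hEfin : E.Finite :=
    (Set.finite_range β).subset (extremePoints_convexHull_subset)
  haveI : Fintype E := hEfin.fintype
  have hcard : Fintype.card E = d := by
    rw [hd, ← Nat.card_coe_set_eq, Nat.card_eq_fintype_card]
  obtain ε := (Fintype.equivFinOfCardEq hcard).symm
  set p : Fin d → (Fin r → ℝ) := fun t => (ε t : Fin r → ℝ) with hp
  have hrangep : Set.range p = E := by
    have h1 : Set.range p = Subtype.val '' (Set.range ε) := Set.range_comp _ _
    rw [h1, Equiv.range_eq_univ, Set.image_univ, Subtype.range_coe]
  -- Krein-Milman: K = convexHull of extreme points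
  have hKM : K = convexHull ℝ (Set.range p) := by
    rw [hrangep]
    have hcomp : IsCompact K := (Set.finite_range β).isCompact_convexHull (𝕜 := ℝ)
    have h1 : closure (convexHull ℝ E) = K :=
      closure_convexHull_extremePoints hcomp (convex_convexHull ℝ _)
    have h2 : closure (convexHull ℝ E) = convexHull ℝ E :=
      (hEfin.isClosed_convexHull (𝕜 := ℝ)).closure_eq
    exact h1.symm.trans h2
  -- each p t is some β (g t)
  have hpE : ∀ t, p t ∈ Set.range β := fun t =>
    extremePoints_convexHull_subset (hrangep ▸ Set.mem_range_self t : p t ∈ E)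
  choose g hg using hpE
  -- each β j is a convex combination of the p t
  have hbK : ∀ j, β j ∈ convexHull ℝ (Set.range p) := by
    intro j
    rw [← hKM, hK]
    exact subset_convexHull ℝ _ (Set.mem_range_self j)
  have hW : ∀ j, ∃ W : Fin d → ℝ, (∀ t, 0 ≤ W t) ∧ (∑ t, W t • p t = β j) := by
    intro j
    have := hbK j
    rw [convexHull_range_eq_exists_affineCombination] at this
    obtain ⟨s, w, hw0, hw1, hwc⟩ := this
    refine ⟨fun t => if t ∈ s then w t else 0, fun t => ?_, ?_⟩
    · dsimp only
      split
      · exact hw0 _ ‹_›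
      · exact le_rfl
    · dsimp only
      rw [← hwc, Finset.affineCombination_eq_linear_combination s p w hw1]
      simp only [ite_smul, zero_smul]
      exact Fintype.sum_ite_mem s (fun t => w t • p t)
  choose W hW0 hWc using hW
  -- the factorization
  refine ⟨fun i t => A i (g t) / S (g t), fun t j => W j t * S j, ?_, ?_, ?_⟩
  · intro i t
    exact div_nonneg (hA i (g t)) (hSpos (g t)).le
  · intro t j
    exact mul_nonneg (hW0 j t) (hSpos j).le
  · funext i j
    erw [Matrix.mul_apply]
    have hβval : ∀ k, β j k = ∑ t, W j t * (y k (g t) / S (g t)) := by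
      intro k
      have := congrFun (hWc j) k
      rw [← this, Finset.sum_apply]
      apply Finset.sum_congr rfl
      intro t _
      rw [Pi.smul_apply, smul_eq_mul, ← hg t, hβ (g t) k]
    have hyval : ∀ k, y k j = S j * ∑ t, W j t * (y k (g t) / S (g t)) := by
      intro k
      rw [← hβval k, hβ j k]
      have hne : (∑ k' : Fin r, y k' j) ≠ 0 := (hSpos j).ne'
      field_simp
      rfl
    rw [hAeval i j]
    have lhs : ∑ k, c i k * y k j
        = ∑ k, ∑ t, c i k * (S j * (W j t * (y k (g t) / S (g t)))) := by
      apply Finset.sum_congr rfl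
      intro k _
      rw [hyval k, Finset.mul_sum, Finset.mul_sum]
    rw [lhs, Finset.sum_comm]
    apply Finset.sum_congr rfl
    intro t _
    rw [hAeval i (g t), Finset.sum_div, Finset.sum_mul]
    apply Finset.sum_congr rfl
    intro k _
    have hne : (∑ k' : Fin r, y k' (g t)) ≠ 0 := (hSpos (g t)).ne'
    field_simp
end

section
/- If A is a nonnegative n×m matrix without zero columns and rank(A) = 2, then A admits an exact nonnegative rank factorization A = FV with F of size n×2 and V of size 2×m, both entrywise nonnegative. -/
theorem exists_rank_two_nonneg_factorization {n m : ℕ}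
    (A : Matrix (Fin n) (Fin m) ℝ) (hA : ∀ i j, 0 ≤ A i j)
    (hcol : ∀ j, ∃ i, A i j ≠ 0) (hrank : A.rank = 2) :
    ∃ (F : Matrix (Fin n) (Fin 2) ℝ) (V : Matrix (Fin 2) (Fin m) ℝ),
      (∀ i j, 0 ≤ F i j) ∧ (∀ i j, 0 ≤ V i j) ∧ A = F * V := by
  classical
  -- m is positive
  have hm : 0 < m := by
    rcases Nat.eq_zero_or_pos m with h | h
    · exfalso
      have h2 := A.rank_le_card_width
      rw [hrank] at h2
      simp [h] at h2
    · exact h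
  haveI : Nonempty (Fin m) := ⟨⟨0, hm⟩⟩
  set j0 : Fin m := ⟨0, hm⟩ with hj0
  -- column sums
  set s : Fin m → ℝ := fun j => ∑ i, A i j with hs_def
  have hs : ∀ j, 0 < s j := by
    intro j
    obtain ⟨i, hi⟩ := hcol j
    exact Finset.sum_pos' (fun i _ => hA i j)
      ⟨i, Finset.mem_univ i, lt_of_le_of_ne (hA i j) (Ne.symm hi)⟩
  -- normalized columns
  set d : Fin m → Fin n → ℝ := fun j i => A i j / s j with hd_def
  have hd0 : ∀ j i, 0 ≤ d j i := fun j i => div_nonneg (hA i j) (hs j).le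
  have hAd : ∀ i j, A i j = s j * d j i := by
    intro i j
    simp only [hd_def]
    rw [mul_div_cancel₀ _ (hs j).ne']
  -- the column space
  set S := LinearMap.range A.mulVecLin with hS_def
  have hcolmem : ∀ j, (fun i => A i j) ∈ S := by
    intro j
    refine ⟨Pi.single j 1, ?_⟩
    ext i
    simp [Matrix.mulVecLin_apply, Matrix.mulVec, dotProduct, Pi.single_apply,
      mul_ite]
  have hdS : ∀ j, d j ∈ S := by
    intro j
    have := S.smul_mem (s j)⁻¹ (hcolmem j)
    convert this using 1
    ext i
    simp [hd_def, div_eq_inv_mul]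
  -- the sum functional
  set σ : (Fin n → ℝ) →ₗ[ℝ] ℝ := ∑ i, LinearMap.proj i with hσ_def
  have hσ : ∀ v : Fin n → ℝ, σ v = ∑ i, v i := by
    intro v
    simp [hσ_def, LinearMap.sum_apply]
  have hσd : ∀ j, σ (d j) = 1 := by
    intro j
    rw [hσ]
    simp only [hd_def]
    rw [← Finset.sum_div, div_self (hs j).ne']
  -- the subspace of sum-zero vectors in S
  set E : Submodule ℝ (Fin n → ℝ) := S ⊓ LinearMap.ker σ with hE_def
  have hES : E < S := by
    refine lt_of_le_of_ne inf_le_left (fun hEq => ?_)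
    have h1 : (fun i => A i j0) ∈ E := hEq ▸ hcolmem j0
    have h2 : σ (fun i => A i j0) = 0 := h1.2
    rw [hσ] at h2
    exact (hs j0).ne' h2
  have hfinS : Module.finrank ℝ S = 2 := hrank
  have hfinE : Module.finrank ℝ E ≤ 1 := by
    have := Submodule.finrank_lt_finrank_of_lt hES
    omega
  obtain ⟨w₀, hw₀⟩ := finrank_le_one_iff.mp hfinE
  set w : Fin n → ℝ := (w₀ : Fin n → ℝ) with hw_def
  have hdE : ∀ j, d j - d j0 ∈ E := by
    intro j
    refine Submodule.mem_inf.mpr ⟨S.sub_mem (hdS j) (hdS j0), ?_⟩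
    simp only [LinearMap.mem_ker]
    rw [map_sub, hσd, hσd, sub_self]
  have hline : ∀ j, ∃ c : ℝ, d j = d j0 + c • w := by
    intro j
    obtain ⟨c, hc⟩ := hw₀ ⟨d j - d j0, hdE j⟩
    refine ⟨c, ?_⟩
    have hc' : c • w = d j - d j0 := congrArg Subtype.val hc
    rw [hc']
    ring_nf
  choose t ht using hline
  obtain ⟨jmax, -, hmax⟩ := Finset.exists_max_image Finset.univ t Finset.univ_nonempty
  obtain ⟨jmin, -, hmin⟩ := Finset.exists_min_image Finset.univ t Finset.univ_nonempty
  have hle : ∀ j, t jmin ≤ t j := fun j => hmin j (Finset.mem_univ j)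
  have hge : ∀ j, t j ≤ t jmax := fun j => hmax j (Finset.mem_univ j)
  have hdline : ∀ j i, d j i = d j0 i + t j * w i := by
    intro j i
    have := congrFun (ht j) i
    simpa using this
  by_cases hΔ : t jmax = t jmin
  · -- degenerate case: all normalized columns equal
    have hteq : ∀ j, t j = t jmin := fun j => le_antisymm (hΔ ▸ hge j) (hle j)
    have hdeq : ∀ j i, d j i = d jmin i := by
      intro j i
      rw [hdline j i, hdline jmin i, hteq j]
    refine ⟨Matrix.of fun i _ => d jmin i, Matrix.of fun _ j => s j / 2,
      fun i k => hd0 jmin i, fun k j => div_nonneg (hs j).le (by norm_num), ?_⟩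
    ext i j
    rw [Matrix.mul_apply, Fin.sum_univ_two]
    simp only [Matrix.of_apply]
    rw [hAd i j, hdeq j i]
    ring
  · have hΔpos : 0 < t jmax - t jmin := by
      have := hle jmax
      cases lt_or_eq_of_le this with
      | inl h => linarith
      | inr h => exact absurd h.symm hΔ
    have hΔne : t jmax - t jmin ≠ 0 := hΔpos.ne'
    refine ⟨Matrix.of fun i k => if (k : ℕ) = 0 then d jmin i else d jmax i,
      Matrix.of fun k j => if (k : ℕ) = 0 then s j * (t jmax - t j) / (t jmax - t jmin)
        else s j * (t j - t jmin) / (t jmax - t jmin), ?_, ?_, ?_⟩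
    · intro i k
      by_cases h : (k : ℕ) = 0 <;> simp only [Matrix.of_apply, h, if_true, if_false,
        reduceIte] <;> exact hd0 _ _
    · intro k j
      by_cases h : (k : ℕ) = 0 <;> simp only [Matrix.of_apply, h, if_true, if_false,
        reduceIte]
      · have h1 : 0 ≤ t jmax - t j := by linarith [hge j]
        exact div_nonneg (mul_nonneg (hs j).le h1) hΔpos.le
      · have h1 : 0 ≤ t j - t jmin := by linarith [hle j]
        exact div_nonneg (mul_nonneg (hs j).le h1) hΔpos.le
    · ext i j
      rw [Matrix.mul_apply, Fin.sum_univ_two]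
      simp only [Matrix.of_apply, Fin.val_zero, Fin.val_one, if_true, if_false,
        reduceIte, one_ne_zero]
      rw [hAd i j, hdline j i, hdline jmin i, hdline jmax i]
      field_simp
      ring
end

section
/- If y_1,...,y_r are linearly independent nonnegative vectors in ℝ^m (with y(i) = Σ_k y_k(i) > 0 for all i) and the basic function β takes exactly r distinct values, then those r values are linearly independent. -/
open Matrix in


theorem basicFunction_range_linearIndependent_of_card_eq {m r : ℕ}
    (y : Fin r → Fin m → ℝ) (hpos : ∀ k i, 0 ≤ y k i)
    (hsum : ∀ i, 0 < ∑ k, y k i) (hind : LinearIndependent ℝ y)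
    (β : Fin m → Fin r → ℝ) (hβ : ∀ i k, β i k = y k i / ∑ k', y k' i)
    (hcard : (Set.range β).ncard = r) :
    LinearIndependent ℝ ((↑) : Set.range β → (Fin r → ℝ)) := by
  classical
  set B : Matrix (Fin m) (Fin r) ℝ := Matrix.of β with hB
  -- The columns of B (rows of Bᵀ) are linearly independent.
  have hcols : LinearIndependent ℝ (Bᵀ) := by
    refine Fintype.linearIndependent_iff.mpr ?_
    intro c hc k
    have hc' : ∀ i : Fin m, ∑ k, c k * β i k = 0 := by
      intro i
      have := congrFun hc i
      simpa [B, Matrix.transpose_apply, Finset.sum_apply, mul_comm] using this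
    have hy : ∑ k, c k • y k = 0 := by
      funext i
      have hne : (∑ k', y k' i) ≠ 0 := (hsum i).ne'
      have : ∑ k, c k * y k i = (∑ k', y k' i) * ∑ k, c k * β i k := by
        rw [Finset.mul_sum]
        refine Finset.sum_congr rfl fun k _ => ?_
        rw [hβ i k]
        field_simp
      simp [Finset.sum_apply, this, hc' i]
    exact Fintype.linearIndependent_iff.mp hind c hy k
  have hrank : B.rank = r := by
    have := hcols.rank_matrix
    rw [show (Matrix.of fun x y => B y x) = Bᵀ from rfl, Matrix.rank_transpose] at this
    simpa using this
  have hspan : (Set.range β).finrank ℝ = r := by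
    have h1 := B.rank_eq_finrank_span_row
    have : Set.range B.row = Set.range β := rfl
    rw [h1, this] at hrank
    exact hrank
  -- Now conclude.
  haveI : Fintype (Set.range β) := Set.fintypeRange β
  rw [linearIndependent_iff_card_eq_finrank_span, Subtype.range_coe, hspan]
  rw [Set.ncard_eq_toFinset_card', Set.toFinset_card] at hcard
  exact hcard
end

section
/- An ordered subspace X of ℝ^m (with the induced componentwise order) is a lattice-subspace of ℝ^m if and only if X has a positive basis, i.e. a basis b_1,...,b_r such that X ∩ ℝ^m_+ equals the set of nonnegative linear combinations of b_1,...,b_r. -/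
/-- `X` is a lattice-subspace of `ℝ^m`: every pair of elements of `X` has a least
upper bound and a greatest lower bound within `X` (for the componentwise order). -/
def IsLatticeSubspace {m : ℕ} (X : Submodule ℝ (Fin m → ℝ)) : Prop :=
  ∀ x ∈ X, ∀ y ∈ X,
    (∃ z ∈ X, x ≤ z ∧ y ≤ z ∧ ∀ w ∈ X, x ≤ w → y ≤ w → z ≤ w) ∧
    (∃ z ∈ X, z ≤ x ∧ z ≤ y ∧ ∀ w ∈ X, w ≤ x → w ≤ y → w ≤ z)

/-- `b` is a positive basis of the subspace `X` of `ℝ^m`: `b` is a basis of `X` and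
the positive cone `X ∩ ℝ^m₊` is exactly the set of nonnegative combinations of the `b i`. -/
def IsPositiveBasis {m r : ℕ} (X : Submodule ℝ (Fin m → ℝ)) (b : Fin r → Fin m → ℝ) : Prop :=
  LinearIndependent ℝ b ∧ Submodule.span ℝ (Set.range b) = X ∧
  {x : Fin m → ℝ | x ∈ X ∧ 0 ≤ x} =
    {x : Fin m → ℝ | ∃ c : Fin r → ℝ, (∀ i, 0 ≤ c i) ∧ x = ∑ i, c i • b i}


lemma isLattice_of_positiveBasis {m r : ℕ} (X : Submodule ℝ (Fin m → ℝ))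
    (b : Fin r → Fin m → ℝ) (hb : IsPositiveBasis X b) : IsLatticeSubspace X := by
  obtain ⟨hind, hspan, hcone⟩ := hb
  -- membership of span
  have hmem : ∀ x ∈ X, ∃ c : Fin r → ℝ, x = ∑ i, c i • b i := by
    intro x hx
    rw [← hspan] at hx
    obtain ⟨c, hc⟩ := Submodule.mem_span_range_iff_exists_fun ℝ |>.mp hx
    exact ⟨c, hc.symm⟩
  have hXmem : ∀ c : Fin r → ℝ, (∑ i, c i • b i) ∈ X := by
    intro c
    rw [← hspan]
    exact Submodule.mem_span_range_iff_exists_fun ℝ |>.mpr ⟨c, rfl⟩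
  -- nonneg combos are ≥ 0
  have hpos : ∀ c : Fin r → ℝ, (∀ i, 0 ≤ c i) → (0:Fin m → ℝ) ≤ ∑ i, c i • b i := by
    intro c hc
    have : (∑ i, c i • b i) ∈ {x : Fin m → ℝ | x ∈ X ∧ 0 ≤ x} := by
      rw [hcone]; exact ⟨c, hc, rfl⟩
    exact this.2
  -- coefficient extraction: x ∈ X, 0 ≤ x, x = ∑ c b ⇒ 0 ≤ c
  have hcoeff : ∀ c : Fin r → ℝ, (0:Fin m → ℝ) ≤ ∑ i, c i • b i → ∀ i, 0 ≤ c i := by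
    intro c hc0
    have hmem' : (∑ i, c i • b i) ∈ {x : Fin m → ℝ | x ∈ X ∧ 0 ≤ x} := ⟨hXmem c, hc0⟩
    rw [hcone] at hmem'
    obtain ⟨d, hd, hde⟩ := hmem'
    have : c = d := by
      have h0 : ∑ i, (c i - d i) • b i = 0 := by
        simp [sub_smul, Finset.sum_sub_distrib, ← hde]
      have := Fintype.linearIndependent_iff.mp hind (fun i => c i - d i) h0
      funext i; have := this i; linarith
    intro i; rw [this]; exact hd i
  intro x hx y hy
  obtain ⟨lam, hlam⟩ := hmem x hx
  obtain ⟨mu, hmu⟩ := hmem y hy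
  have key : ∀ (ν : Fin r → ℝ), (∀ i, lam i ≤ ν i) → x ≤ ∑ i, ν i • b i := by
    intro ν hν
    have : (0:Fin m → ℝ) ≤ ∑ i, (ν i - lam i) • b i := hpos _ (fun i => by linarith [hν i])
    have hsub : ∑ i, (ν i - lam i) • b i = (∑ i, ν i • b i) - x := by
      simp [sub_smul, Finset.sum_sub_distrib, hlam]
    rw [hsub] at this; exact sub_nonneg.mp this
  -- use uniqueness to compare coefficients of elements of X
  have hcomp : ∀ (w : Fin m → ℝ) (ν : Fin r → ℝ), w = ∑ i, ν i • b i → x ≤ w →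
      ∀ i, lam i ≤ ν i := by
    intro w ν hw hxw i
    have h1 : (0:Fin m → ℝ) ≤ ∑ i, (ν i - lam i) • b i := by
      have hsub : ∑ i, (ν i - lam i) • b i = w - x := by
        simp [sub_smul, Finset.sum_sub_distrib, hlam, hw]
      rw [hsub]; exact sub_nonneg.mpr hxw
    have := hcoeff _ h1 i; linarith
  refine ⟨⟨∑ i, (max (lam i) (mu i)) • b i, hXmem _, ?_, ?_, ?_⟩,
          ⟨x + y - ∑ i, (max (lam i) (mu i)) • b i, ?_, ?_, ?_, ?_⟩⟩
  · exact key _ (fun i => le_max_left _ _)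
  · -- y ≤ sup : symmetric: need a `key` for mu too
    have : (0:Fin m → ℝ) ≤ ∑ i, (max (lam i) (mu i) - mu i) • b i :=
      hpos _ (fun i => by simp [le_max_right])
    have hsub : ∑ i, (max (lam i) (mu i) - mu i) • b i
        = (∑ i, (max (lam i) (mu i)) • b i) - y := by
      simp [sub_smul, Finset.sum_sub_distrib, hmu]
    rw [hsub] at this; exact sub_nonneg.mp this
  · intro w hw hxw hyw
    obtain ⟨ν, hν⟩ := hmem w hw
    have h1 := hcomp w ν hν hxw
    have h2 : ∀ i, mu i ≤ ν i := by
      intro i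
      have hsub : ∑ j, (ν j - mu j) • b j = w - y := by
        simp [sub_smul, Finset.sum_sub_distrib, hmu, hν]
      have h1' : (0:Fin m → ℝ) ≤ ∑ j, (ν j - mu j) • b j := by
        rw [hsub]; exact sub_nonneg.mpr hyw
      have := hcoeff _ h1' i; linarith
    have : (0:Fin m → ℝ) ≤ ∑ i, (ν i - max (lam i) (mu i)) • b i :=
      hpos _ (fun i => by have := h1 i; have := h2 i; simp [le_sub_iff_add_le]; constructor <;> linarith)
    have hsub : ∑ i, (ν i - max (lam i) (mu i)) • b i
        = w - ∑ i, (max (lam i) (mu i)) • b i := by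
      simp [sub_smul, Finset.sum_sub_distrib, hν]
    rw [hsub] at this; exact sub_nonneg.mp this
  · exact Submodule.sub_mem X (Submodule.add_mem X hx hy) (hXmem _)
  · -- x + y - sup ≤ x  ↔  y ≤ sup
    have : (0:Fin m → ℝ) ≤ ∑ i, (max (lam i) (mu i) - mu i) • b i :=
      hpos _ (fun i => by simp [le_max_right])
    have hsub : ∑ i, (max (lam i) (mu i) - mu i) • b i
        = (∑ i, (max (lam i) (mu i)) • b i) - y := by
      simp [sub_smul, Finset.sum_sub_distrib, hmu]
    rw [hsub] at this
    have := sub_nonneg.mp this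
    intro j; have := this j; simp at this ⊢; linarith
  · have hkey := key _ (fun i => le_max_left (lam i) (mu i))
    intro j; have := hkey j; simp at this ⊢; linarith
  · intro w hw hwx hwy
    have hxyw : x ≤ x + y - w := by
      intro j; have := hwy j; simp; linarith
    obtain ⟨ν, hν⟩ := hmem (x + y - w) (Submodule.sub_mem X (Submodule.add_mem X hx hy) hw)
    have h1 := hcomp _ ν hν hxyw
    have h2 : ∀ i, mu i ≤ ν i := by
      intro i
      have hsub : ∑ j, (ν j - mu j) • b j = (x + y - w) - y := by
        simp only [sub_smul, Finset.sum_sub_distrib, ← hν, ← hmu]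
      have h1' : (0:Fin m → ℝ) ≤ ∑ j, (ν j - mu j) • b j := by
        rw [hsub]
        intro j; have := hwx j; simp; linarith
      have := hcoeff _ h1' i; linarith
    have hge : (0:Fin m → ℝ) ≤ ∑ i, (ν i - max (lam i) (mu i)) • b i :=
      hpos _ (fun i => by have := h1 i; have := h2 i; simp [le_sub_iff_add_le]; constructor <;> linarith)
    have hsub : ∑ i, (ν i - max (lam i) (mu i)) • b i
        = (x + y - w) - ∑ i, (max (lam i) (mu i)) • b i := by
      simp only [sub_smul, Finset.sum_sub_distrib, ← hν]
    rw [hsub] at hge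
    have := sub_nonneg.mp hge
    intro j; have := this j; simp at this ⊢; linarith


/-- `z` is the greatest lower bound of `x` and `y` within `X`. -/
def IsInfOf {m : ℕ} (X : Submodule ℝ (Fin m → ℝ)) (x y z : Fin m → ℝ) : Prop :=
  z ∈ X ∧ z ≤ x ∧ z ≤ y ∧ ∀ w ∈ X, w ≤ x → w ≤ y → w ≤ z

namespace IsInfOf

variable {m : ℕ} {X : Submodule ℝ (Fin m → ℝ)} {x y z : Fin m → ℝ}

lemma smul (h : IsInfOf X x y z) {a : ℝ} (ha : 0 < a) :
    IsInfOf X (a • x) (a • y) (a • z) := by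
  obtain ⟨hzX, hzx, hzy, hglb⟩ := h
  refine ⟨X.smul_mem a hzX, ?_, ?_, ?_⟩
  · intro j; simpa using mul_le_mul_of_nonneg_left (hzx j) ha.le
  · intro j; simpa using mul_le_mul_of_nonneg_left (hzy j) ha.le
  · intro w hw hwx hwy
    have h1 : a⁻¹ • w ≤ x := by
      intro j; have := hwx j
      simp only [Pi.smul_apply, smul_eq_mul] at this ⊢
      rw [inv_mul_le_iff₀ ha]; linarith [this]
    have h2 : a⁻¹ • w ≤ y := by
      intro j; have := hwy j
      simp only [Pi.smul_apply, smul_eq_mul] at this ⊢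
      rw [inv_mul_le_iff₀ ha]; linarith [this]
    have := hglb (a⁻¹ • w) (X.smul_mem _ hw) h1 h2
    intro j; have := this j
    simp only [Pi.smul_apply, smul_eq_mul] at this ⊢
    calc w j = a * (a⁻¹ * w j) := by field_simp
    _ ≤ a * z j := mul_le_mul_of_nonneg_left this ha.le

lemma add (h : IsInfOf X x y z) {c : Fin m → ℝ} (hc : c ∈ X) :
    IsInfOf X (x + c) (y + c) (z + c) := by
  obtain ⟨hzX, hzx, hzy, hglb⟩ := h
  refine ⟨X.add_mem hzX hc, ?_, ?_, ?_⟩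
  · intro j; have := hzx j; simpa using this
  · intro j; have := hzy j; simpa using this
  · intro w hw hwx hwy
    have := hglb (w - c) (X.sub_mem hw hc)
      (fun j => by have := hwx j; simp at this ⊢; linarith)
      (fun j => by have := hwy j; simp at this ⊢; linarith)
    intro j; have := this j; simp at this ⊢; linarith

end IsInfOf

section Disj

variable {m : ℕ} {X : Submodule ℝ (Fin m → ℝ)}

lemma isInfOf_zero_right {u : Fin m → ℝ} (hu : 0 ≤ u) : IsInfOf X u 0 0 :=
  ⟨X.zero_mem, hu, le_rfl, fun _ _ _ h => h⟩

lemma disj_smul {u w : Fin m → ℝ} (hw0 : 0 ≤ w)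
    (h : IsInfOf X u w 0) {a : ℝ} (ha : 0 ≤ a) : IsInfOf X u (a • w) 0 := by
  have hu0 := h.2.1
  have hglb := h.2.2.2
  have haw : (0:Fin m → ℝ) ≤ a • w := fun j => by
    simpa using mul_nonneg ha (hw0 j)
  refine ⟨X.zero_mem, hu0, haw, ?_⟩
  intro z hz hzu hzw
  rcases le_or_gt a 1 with h1 | h1
  · -- a • w ≤ w
    have : a • w ≤ w := fun j => by
      have hj : (0:ℝ) ≤ w j := by simpa using hw0 j
      simp only [Pi.smul_apply, smul_eq_mul]
      nlinarith
    exact hglb z hz hzu (le_trans hzw this)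
  · have hs := h.smul (lt_trans one_pos h1)
    rw [smul_zero] at hs
    have hu' : u ≤ a • u := fun j => by
      have hj : (0:ℝ) ≤ u j := by simpa using hu0 j
      simp only [Pi.smul_apply, smul_eq_mul]
      nlinarith
    exact hs.2.2.2 z hz (le_trans hzu hu') hzw

lemma disj_add {u v w : Fin m → ℝ} (hv : v ∈ X) (hw : w ∈ X)
    (hw0 : 0 ≤ w)
    (huv : IsInfOf X u v 0) (huw : IsInfOf X u w 0) : IsInfOf X u (v + w) 0 := by
  have hu0 : 0 ≤ u := huv.2.1
  have hv0 : 0 ≤ v := huv.2.2.1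
  refine ⟨X.zero_mem, hu0, fun j => add_nonneg (hv0 j) (hw0 j), ?_⟩
  intro z hz hzu hzvw
  have hshift := huv.add hw
  rw [zero_add] at hshift
  have hzuw : z ≤ u + w := le_trans hzu (fun j => by
    have := hw0 j; simp at this ⊢; linarith)
  have hzw : z ≤ w := hshift.2.2.2 z hz hzuw hzvw
  exact huw.2.2.2 z hz hzu hzw

lemma disj_sum {u : Fin m → ℝ} {ι : Type*} (s : Finset ι) (w : ι → Fin m → ℝ) (a : ι → ℝ)
    (hu0 : 0 ≤ u) (huX : u ∈ X)
    (hwX : ∀ i ∈ s, w i ∈ X) (hw0 : ∀ i ∈ s, 0 ≤ w i) (ha : ∀ i ∈ s, 0 ≤ a i)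
    (hd : ∀ i ∈ s, IsInfOf X u (w i) 0) :
    IsInfOf X u (∑ i ∈ s, a i • w i) 0 := by
  classical
  induction s using Finset.induction_on with
  | empty => simpa using isInfOf_zero_right hu0
  | insert i s hni ih =>
    rw [Finset.sum_insert hni]
    have hmem : ∀ j ∈ s, w j ∈ X := fun j hj => hwX j (Finset.mem_insert_of_mem hj)
    have h0 : ∀ j ∈ s, 0 ≤ w j := fun j hj => hw0 j (Finset.mem_insert_of_mem hj)
    have ha' : ∀ j ∈ s, 0 ≤ a j := fun j hj => ha j (Finset.mem_insert_of_mem hj)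
    have hd' : ∀ j ∈ s, IsInfOf X u (w j) 0 := fun j hj => hd j (Finset.mem_insert_of_mem hj)
    have hrest := ih hmem h0 ha' hd'
    have hi := Finset.mem_insert_self i s
    have h1 : IsInfOf X u (a i • w i) 0 := disj_smul (hw0 i hi) (hd i hi) (ha i hi)
    refine disj_add (X.smul_mem _ (hwX i hi)) (Submodule.sum_mem X ?_) ?_ h1 hrest
    · exact fun j hj => X.smul_mem _ (hmem j hj)
    · intro k
      have : (0:ℝ) ≤ ∑ j ∈ s, a j * w j k :=
        Finset.sum_nonneg fun j hj => mul_nonneg (ha' j hj) (by simpa using h0 j hj k)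
      simpa [Finset.sum_apply] using this
end Disj

lemma exists_positiveBasis_of_isLattice {m : ℕ} (X : Submodule ℝ (Fin m → ℝ))
    (hX : IsLatticeSubspace X) :
    ∃ (r : ℕ) (b : Fin r → Fin m → ℝ), IsPositiveBasis X b := by
  classical
  set f : (Fin m → ℝ) → ℝ := fun x => ∑ j, x j with hf
  have hf_nonneg : ∀ {x : Fin m → ℝ}, 0 ≤ x → 0 ≤ f x := fun {x} hx =>
    Finset.sum_nonneg fun j _ => by simpa using hx j
  have hf_zero : ∀ {x : Fin m → ℝ}, 0 ≤ x → f x = 0 → x = 0 := by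
    intro x hx h0
    funext j
    have := (Finset.sum_eq_zero_iff_of_nonneg (fun j _ => by simpa using hx j)).mp h0
    simpa using this j (Finset.mem_univ j)
  have hf_smul : ∀ (a : ℝ) (x : Fin m → ℝ), f (a • x) = a * f x := by
    intro a x; simp [hf, Finset.mul_sum]
  have hf_sub : ∀ (x y : Fin m → ℝ), f (x - y) = f x - f y := by
    intro x y; simp [hf, Finset.sum_sub_distrib]
  set B : Set (Fin m → ℝ) := {x | x ∈ X ∧ 0 ≤ x ∧ f x = 1} with hBdef
  set E : Set (Fin m → ℝ) := B.extremePoints ℝ with hEdef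
  have hEB : E ⊆ B := extremePoints_subset
  -- convexity of B
  have hBconv : Convex ℝ B := by
    intro x hx y hy a b ha hb hab
    refine ⟨X.add_mem (X.smul_mem a hx.1) (X.smul_mem b hy.1), ?_, ?_⟩
    · intro j
      have h1 := hx.2.1 j
      have h2 := hy.2.1 j
      simp only [Pi.add_apply, Pi.smul_apply, smul_eq_mul, Pi.zero_apply] at h1 h2 ⊢
      nlinarith
    · have : f (a • x + b • y) = a * f x + b * f y := by
        simp [hf, Finset.sum_add_distrib, Finset.mul_sum]
      rw [this, hx.2.2, hy.2.2]; ring_nf; linarith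
  -- compactness of B
  have hBcomp : IsCompact B := by
    have hcl : IsClosed B := by
      have h1 : IsClosed (X : Set (Fin m → ℝ)) := Submodule.closed_of_finiteDimensional X
      have h2 : IsClosed {x : Fin m → ℝ | 0 ≤ x} := isClosed_Ici
      have h3 : IsClosed {x : Fin m → ℝ | f x = 1} := by
        have : Continuous f := continuous_finset_sum _ fun j _ => continuous_apply j
        exact isClosed_eq this continuous_const
      have : B = (X : Set (Fin m → ℝ)) ∩ ({x | 0 ≤ x} ∩ {x | f x = 1}) := by
        ext x; simp [hBdef, Set.mem_setOf_eq, and_assoc]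
      rw [this]
      exact h1.inter (h2.inter h3)
    refine IsCompact.of_isClosed_subset (isCompact_Icc (a := (0 : Fin m → ℝ)) (b := 1)) hcl ?_
    intro x hx
    refine ⟨hx.2.1, ?_⟩
    intro j
    have hle : x j ≤ ∑ k, x k :=
      Finset.single_le_sum (fun k _ => by simpa using hx.2.1 k) (Finset.mem_univ j)
    have : f x = 1 := hx.2.2
    simpa [hf, this] using hle.trans_eq this
  -- Krein-Milman
  have hKM : closure (convexHull ℝ E) = B := closure_convexHull_extremePoints hBcomp hBconv
  -- extreme ray property
  have hray : ∀ u ∈ E, ∀ w ∈ X, 0 ≤ w → w ≤ u → w = f w • u := by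
    intro u huE w hwX hw0 hwu
    have huB : u ∈ B := hEB huE
    have ht0 : 0 ≤ f w := hf_nonneg hw0
    have huw0 : (0:Fin m → ℝ) ≤ u - w := fun j => by
      have := hwu j; simp at this ⊢; linarith
    have ht1 : f w ≤ 1 := by
      have := hf_nonneg huw0
      rw [hf_sub, huB.2.2] at this
      linarith
    rcases eq_or_lt_of_le ht0 with h0 | h0
    · have hw' : w = 0 := hf_zero hw0 h0.symm
      rw [hw']; simp [hf]
    rcases eq_or_lt_of_le ht1 with h1 | h1
    · have huw : u - w = 0 := hf_zero huw0 (by rw [hf_sub, huB.2.2, ← h1]; ring)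
      have : w = u := by
        have := sub_eq_zero.mp huw; rw [this]
      rw [this, huB.2.2, one_smul]
    · set t := f w with htdef
      have htne : t ≠ 0 := ne_of_gt h0
      have h1t : (0:ℝ) < 1 - t := by linarith
      have h1tne : (1:ℝ) - t ≠ 0 := ne_of_gt h1t
      have hta : t⁻¹ • w ∈ B := by
        refine ⟨X.smul_mem _ hwX, ?_, ?_⟩
        · intro j
          have := hw0 j; simp at this ⊢
          exact mul_nonneg (inv_nonneg.mpr h0.le) this
        · rw [hf_smul]; field_simp; rfl
      have htb : (1-t)⁻¹ • (u - w) ∈ B := by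
        refine ⟨X.smul_mem _ (X.sub_mem huB.1 hwX), ?_, ?_⟩
        · intro j
          have := huw0 j; simp at this ⊢
          have h' : (0:ℝ) ≤ u j - w j := by linarith
          exact mul_nonneg (inv_nonneg.mpr h1t.le) h'
        · rw [hf_smul, hf_sub, huB.2.2]; field_simp; rfl
      have hseg : u ∈ openSegment ℝ (t⁻¹ • w) ((1-t)⁻¹ • (u - w)) := by
        refine ⟨t, 1 - t, h0, h1t, by ring, ?_⟩
        rw [smul_smul, smul_smul, mul_inv_cancel₀ htne, mul_inv_cancel₀ h1tne,
          one_smul, one_smul]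
        abel
      have hext := (mem_extremePoints.mp huE).2 _ hta _ htb hseg
      have h1 : t⁻¹ • w = u := hext.1
      calc w = t • (t⁻¹ • w) := by rw [smul_smul, mul_inv_cancel₀ htne, one_smul]
      _ = t • u := by rw [h1]
  -- extreme points are pairwise disjoint
  have hdisjE : ∀ u ∈ E, ∀ v ∈ E, u ≠ v → IsInfOf X u v 0 := by
    intro u huE v hvE huv
    have huB : u ∈ B := hEB huE
    have hvB : v ∈ B := hEB hvE
    obtain ⟨z, hzX, hzu, hzv, hglb⟩ := (hX u huB.1 v hvB.1).2
    have hz0 : (0:Fin m → ℝ) ≤ z := hglb 0 X.zero_mem huB.2.1 hvB.2.1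
    have h1 : z = f z • u := hray u huE z hzX hz0 hzu
    have h2 : z = f z • v := hray v hvE z hzX hz0 hzv
    rcases eq_or_lt_of_le (hf_nonneg hz0) with h0 | h0
    · have hz : z = 0 := hf_zero hz0 h0.symm
      subst hz
      exact ⟨X.zero_mem, huB.2.1, hvB.2.1, hglb⟩
    · exfalso
      exact huv (smul_right_injective _ (ne_of_gt h0) (h1.symm.trans h2))
  -- linear independence
  -- no positive coefficient in a vanishing combination of extreme points
  have hkeypos : ∀ (s : Finset (Fin m → ℝ)), ↑s ⊆ E → ∀ c : (Fin m → ℝ) → ℝ,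
      ∑ w ∈ s, c w • w = 0 → ∀ u ∈ s, 0 < c u → False := by
    intro s hsE c hsum u hus hcu
    have huE : u ∈ E := hsE hus
    have huB : u ∈ B := hEB huE
    set neg := s.filter (fun w => ¬ 0 ≤ c w) with hnegdef
    set pos := s.filter (fun w => 0 ≤ c w) with hposdef
    set v : Fin m → ℝ := ∑ w ∈ neg, (-c w) • w with hvdef
    have hsplit : ∑ w ∈ pos, c w • w = v := by
      have := Finset.sum_filter_add_sum_filter_not s (fun w => 0 ≤ c w) (fun w => c w • w)
      rw [hsum] at this
      rw [hvdef]
      simp only [neg_smul, Finset.sum_neg_distrib]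
      rw [← hposdef, ← hnegdef] at this
      linear_combination (norm := module) this
    have hupos : u ∈ pos := Finset.mem_filter.mpr ⟨hus, hcu.le⟩
    -- componentwise c u • u ≤ v
    have hcuv : c u • u ≤ v := by
      intro j
      have hrest : (0:ℝ) ≤ ∑ w ∈ pos.erase u, c w * w j := by
        refine Finset.sum_nonneg fun w hw => ?_
        have hw' := Finset.mem_filter.mp (Finset.mem_of_mem_erase hw)
        have hwB : w ∈ B := hEB (hsE hw'.1)
        exact mul_nonneg hw'.2 (by simpa using hwB.2.1 j)
      have hsum_j : ∑ w ∈ pos, c w * w j = v j := by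
        have := congrFun hsplit j
        simpa [Finset.sum_apply] using this
      have herase : c u * u j + ∑ w ∈ pos.erase u, c w * w j = ∑ w ∈ pos, c w * w j := by
        rw [add_comm]
        exact Finset.sum_erase_add pos _ hupos
      simp only [Pi.smul_apply, smul_eq_mul]
      linarith [hsum_j, herase, hrest]
    -- u is disjoint from v
    have hdv : IsInfOf X u v 0 := by
      have := disj_sum (X := X) neg (fun w => w) (fun w => -c w) huB.2.1 huB.1
        (fun w hw => (hEB (hsE (Finset.mem_filter.mp hw).1)).1)
        (fun w hw => (hEB (hsE (Finset.mem_filter.mp hw).1)).2.1)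
        (fun w hw => by
          have := (Finset.mem_filter.mp hw).2
          push_neg at this
          show (0:ℝ) ≤ -c w
          linarith)
        (fun w hw => by
          refine hdisjE u huE w (hsE (Finset.mem_filter.mp hw).1) ?_
          intro h
          have := (Finset.mem_filter.mp hw).2
          rw [← h] at this
          exact this hcu.le)
      simpa [hvdef] using this
    -- derive contradiction
    set t := min (c u) 1 with htdef
    have ht0 : 0 < t := lt_min hcu one_pos
    have htu : t • u ≤ u := by
      intro j
      have hj : (0:ℝ) ≤ u j := by simpa using huB.2.1 j
      have : t ≤ 1 := min_le_right _ _
      simp only [Pi.smul_apply, smul_eq_mul]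
      nlinarith
    have htv : t • u ≤ v := by
      intro j
      have hj : (0:ℝ) ≤ u j := by simpa using huB.2.1 j
      have h1 : t ≤ c u := min_le_left _ _
      have h2 := hcuv j
      simp only [Pi.smul_apply, smul_eq_mul] at h2 ⊢
      nlinarith
    have hle := hdv.2.2.2 (t • u) (X.smul_mem _ huB.1) htu htv
    have hu0 : u = 0 := by
      funext j
      have h1 := hle j
      have h2 : (0:ℝ) ≤ u j := by simpa using huB.2.1 j
      simp only [Pi.smul_apply, smul_eq_mul, Pi.zero_apply] at h1 ⊢
      nlinarith
    have := huB.2.2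
    rw [hu0] at this
    simp [hf] at this
  have hkey : ∀ (s : Finset (Fin m → ℝ)), ↑s ⊆ E → ∀ c : (Fin m → ℝ) → ℝ,
      ∑ w ∈ s, c w • w = 0 → ∀ u ∈ s, c u = 0 := by
    intro s hsE c hsum u hus
    by_contra hne
    rcases lt_or_gt_of_ne hne with hlt | hgt
    · refine hkeypos s hsE (fun w => -c w) ?_ u hus (show (0:ℝ) < -c u by linarith)
      simp only [neg_smul, Finset.sum_neg_distrib, hsum, neg_zero]
    · exact hkeypos s hsE c hsum u hus hgt
  have hindep : LinearIndependent ℝ (fun x : E => (x : Fin m → ℝ)) := by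
    rw [linearIndependent_iff']
    intro s g hsum i his
    set c : (Fin m → ℝ) → ℝ := fun w => if h : w ∈ E then g ⟨w, h⟩ else 0 with hcdef
    have hinj : ∀ a ∈ s, ∀ b ∈ s, (a : Fin m → ℝ) = (b : Fin m → ℝ) → a = b :=
      fun a _ b _ h => Subtype.ext h
    have hsum' : ∑ w ∈ s.image (fun x : E => (x : Fin m → ℝ)), c w • w = 0 := by
      rw [Finset.sum_image hinj, ← hsum]
      refine Finset.sum_congr rfl fun x _ => ?_
      simp [hcdef, x.2]
    have := hkey (s.image (fun x : E => (x : Fin m → ℝ)))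
      (by
        intro w hw
        simp only [Finset.coe_image, Set.mem_image] at hw
        obtain ⟨x, -, rfl⟩ := hw
        exact x.2) c hsum' i (Finset.mem_image_of_mem _ his)
    simpa [hcdef, i.2] using this
  have hEfin : E.Finite := hindep.setFinite
  -- span
  have hBspan : B ⊆ (Submodule.span ℝ E : Set (Fin m → ℝ)) := by
    have h1 : convexHull ℝ E ⊆ (Submodule.span ℝ E : Set (Fin m → ℝ)) :=
      convexHull_min Submodule.subset_span (Submodule.span ℝ E).convex
    have h2 : IsClosed ((Submodule.span ℝ E : Submodule ℝ (Fin m → ℝ)) : Set (Fin m → ℝ)) :=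
      Submodule.closed_of_finiteDimensional _
    calc B = closure (convexHull ℝ E) := hKM.symm
    _ ⊆ closure ((Submodule.span ℝ E : Submodule ℝ (Fin m → ℝ)) : Set (Fin m → ℝ)) :=
      closure_mono h1
    _ = _ := h2.closure_eq
  have hCspan : ∀ x ∈ X, 0 ≤ x → x ∈ Submodule.span ℝ E := by
    intro x hxX hx0
    rcases eq_or_ne x 0 with rfl | hne
    · exact Submodule.zero_mem _
    have ht : 0 < f x := by
      rcases eq_or_lt_of_le (hf_nonneg hx0) with h | h
      · exact absurd (hf_zero hx0 h.symm) hne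
      · exact h
    have hyB : (f x)⁻¹ • x ∈ B := by
      refine ⟨X.smul_mem _ hxX, ?_, ?_⟩
      · intro j
        have := hx0 j; simp at this ⊢
        exact mul_nonneg (inv_nonneg.mpr ht.le) this
      · rw [hf_smul]; field_simp
    have := hBspan hyB
    have hx_eq : x = (f x) • ((f x)⁻¹ • x) := by
      rw [smul_smul, mul_inv_cancel₀ (ne_of_gt ht), one_smul]
    rw [hx_eq]
    exact Submodule.smul_mem _ _ this
  have hspan : Submodule.span ℝ E = X := by
    apply le_antisymm
    · rw [Submodule.span_le]
      exact fun x hx => (hEB hx).1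
    · intro x hx
      obtain ⟨z, hzX, hxz, h0z, -⟩ := (hX x hx 0 X.zero_mem).1
      have h1 : z ∈ Submodule.span ℝ E := hCspan z hzX h0z
      have h2 : z - x ∈ Submodule.span ℝ E := by
        refine hCspan (z - x) (X.sub_mem hzX hx) ?_
        intro j; have := hxz j; simp at this ⊢; linarith
      have : x = z - (z - x) := by abel
      rw [this]
      exact Submodule.sub_mem _ h1 h2
  -- assemble the positive basis
  haveI : Fintype E := hEfin.fintype
  set e : Fin (Fintype.card E) ≃ E := (Fintype.equivFin E).symm with hedef
  set b : Fin (Fintype.card E) → (Fin m → ℝ) := fun i => ((e i : E) : Fin m → ℝ) with hbdef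
  have hrange : Set.range b = E := by
    have h1 : Set.range b = (fun x : E => (x : Fin m → ℝ)) '' Set.range ⇑e :=
      Set.range_comp _ _
    rw [h1, Equiv.range_eq_univ, Set.image_univ, Subtype.range_coe]
  have hbE : ∀ i, b i ∈ E := fun i => by rw [← hrange]; exact Set.mem_range_self i
  have hBhull : B = convexHull ℝ E := by
    rw [← hKM, (hEfin.isClosed_convexHull (𝕜 := ℝ)).closure_eq]
  have reindex : ∀ g : (Fin m → ℝ) → (Fin m → ℝ),
      ∑ z ∈ hEfin.toFinset, g z = ∑ i, g (b i) := by
    intro g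
    calc ∑ z ∈ hEfin.toFinset, g z
        = ∑ z : (hEfin.toFinset : Set (Fin m → ℝ)), g ↑z := (Finset.sum_finset_coe _ _).symm
      _ = ∑ x : E, g ↑x :=
          Fintype.sum_equiv (Equiv.setCongr hEfin.coe_toFinset) _ _ (fun z => rfl)
      _ = ∑ i, g (b i) := (Equiv.sum_comp e (fun x : E => g ↑x)).symm
  refine ⟨Fintype.card E, b, hindep.comp e e.injective, by rw [hrange]; exact hspan, ?_⟩
  ext x
  simp only [Set.mem_setOf_eq]
  constructor
  · rintro ⟨hxX, hx0⟩
    rcases eq_or_ne x 0 with rfl | hne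
    · exact ⟨0, fun i => le_rfl, by simp⟩
    have ht : 0 < f x := by
      rcases eq_or_lt_of_le (hf_nonneg hx0) with h | h
      · exact absurd (hf_zero hx0 h.symm) hne
      · exact h
    have hyB : (f x)⁻¹ • x ∈ B := by
      refine ⟨X.smul_mem _ hxX, ?_, ?_⟩
      · intro j
        have := hx0 j; simp at this ⊢
        exact mul_nonneg (inv_nonneg.mpr ht.le) this
      · rw [hf_smul]; field_simp
    rw [hBhull, hEfin.convexHull_eq] at hyB
    obtain ⟨wts, hw0, hw1, hcm⟩ := hyB
    have hcm' : (f x)⁻¹ • x = ∑ z ∈ hEfin.toFinset, wts z • z := by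
      rw [← hcm, Finset.centerMass_eq_of_sum_1 _ _ hw1]
      simp
    refine ⟨fun i => f x * wts (b i), fun i => mul_nonneg ht.le (hw0 _ (hbE i)), ?_⟩
    have hfinal : ∑ i, (f x * wts (b i)) • b i = x := by
      rw [← reindex (fun z => (f x * wts z) • z)]
      have h2 : ∑ z ∈ hEfin.toFinset, (f x * wts z) • z
          = (f x) • ∑ z ∈ hEfin.toFinset, wts z • z := by
        rw [Finset.smul_sum]; simp only [smul_smul]
      rw [h2, ← hcm', smul_smul, mul_inv_cancel₀ (ne_of_gt ht), one_smul]
    exact hfinal.symm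
  · rintro ⟨c, hc0, rfl⟩
    constructor
    · exact Submodule.sum_mem X fun i _ => X.smul_mem _ (hEB (hbE i)).1
    · intro j
      have h1 : (0:ℝ) ≤ ∑ i, c i * b i j :=
        Finset.sum_nonneg fun i _ =>
          mul_nonneg (hc0 i) (by simpa using (hEB (hbE i)).2.1 j)
      simpa [Finset.sum_apply] using h1

/-- An ordered subspace of `ℝ^m` is a lattice-subspace iff it has a positive basis. -/
theorem isLatticeSubspace_iff_exists_positiveBasis {m : ℕ}
    (X : Submodule ℝ (Fin m → ℝ)) :
    IsLatticeSubspace X ↔ ∃ (r : ℕ) (b : Fin r → Fin m → ℝ), IsPositiveBasis X b := by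
  constructor
  · exact exists_positiveBasis_of_isLattice X
  · rintro ⟨r, b, hb⟩
    exact isLattice_of_positiveBasis X b hb
end

section
/- The subspace X of ℝ^m generated by linearly independent nonnegative vectors z_1,...,z_r (with everywhere-positive sum) is a sublattice of ℝ^m if and only if the range of their basic function β has exactly r elements. -/
theorem span_sublattice_iff_range_basicFunction_card {m r : ℕ}
    (z : Fin r → Fin m → ℝ) (hpos : ∀ k i, 0 ≤ z k i)
    (hsum : ∀ i, 0 < ∑ k, z k i) (hind : LinearIndependent ℝ z)
    (β : Fin m → Fin r → ℝ) (hβ : ∀ i k, β i k = z k i / ∑ k', z k' i)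
    (X : Submodule ℝ (Fin m → ℝ)) (hX : X = Submodule.span ℝ (Set.range z)) :
    (∀ x ∈ X, ∀ y ∈ X, x ⊔ y ∈ X ∧ x ⊓ y ∈ X) ↔ (Set.range β).ncard = r := by
  classical
  set s : Fin m → ℝ := fun i => ∑ k, z k i with hs
  have hspos : ∀ i, 0 < s i := hsum
  have hzβ : ∀ k i, z k i = β i k * s i := by
    intro k i
    have hne : (∑ k', z k' i) ≠ 0 := (hsum i).ne'
    rw [hβ, div_mul_cancel₀ _ hne]
  set T : Finset (Fin r → ℝ) := Finset.image β Finset.univ with hT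
  have hmemT : ∀ i, β i ∈ T := fun i => Finset.mem_image_of_mem β (Finset.mem_univ i)
  set w : (Fin r → ℝ) → Fin m → ℝ := fun p i => if β i = p then s i else 0 with hw
  -- evaluation lemma
  have hEval : ∀ (c : ↥T → ℝ) (i : Fin m),
      (∑ p : ↥T, c p • w p.1) i = c ⟨β i, hmemT i⟩ * s i := by
    intro c i
    rw [Finset.sum_apply]
    rw [Finset.sum_eq_single (⟨β i, hmemT i⟩ : ↥T)]
    · simp [hw]
    · intro q _ hq
      have hne : β i ≠ q.1 := by
        intro h
        exact hq (by ext1; exact h.symm)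
      simp [hw, hne]
    · intro h; exact absurd (Finset.mem_univ _) h
  have hLI : LinearIndependent ℝ (fun p : ↥T => w p.1) := by
    rw [Fintype.linearIndependent_iff]
    intro g hg p
    obtain ⟨i, _, hi⟩ := Finset.mem_image.mp p.2
    have := congrFun hg i
    rw [hEval] at this
    have hp : (⟨β i, hmemT i⟩ : ↥T) = p := by ext1; exact hi
    rw [hp, Pi.zero_apply] at this
    exact (mul_eq_zero.mp this).resolve_right (hspos i).ne'
  set Y : Submodule ℝ (Fin m → ℝ) := Submodule.span ℝ (Set.range fun p : ↥T => w p.1) with hY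
  have hzY : ∀ k, z k = ∑ p : ↥T, p.1 k • w p.1 := by
    intro k
    funext i
    rw [hEval (fun p => p.1 k) i]
    exact hzβ k i
  have hXY : X ≤ Y := by
    rw [hX]
    apply Submodule.span_le.2
    rintro _ ⟨k, rfl⟩
    rw [hzY k]
    exact Submodule.sum_mem _ fun p _ =>
      Submodule.smul_mem _ _ (Submodule.subset_span ⟨p, rfl⟩)
  have hfinX : Module.finrank ℝ X = r := by
    rw [hX]
    simpa using finrank_span_eq_card hind
  have hfinY : Module.finrank ℝ Y = T.card := by
    rw [hY]
    simpa using finrank_span_eq_card hLI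
  have hrleT : r ≤ T.card := by
    have h := Submodule.finrank_mono hXY
    rwa [hfinX, hfinY] at h
  have hcardT : (Set.range β).ncard = T.card := by
    have : Set.range β = ↑T := by
      rw [hT]; simp
    rw [this, Set.ncard_coe_finset]
  rw [hcardT]
  have hsX : (∑ k, z k) ∈ X := by
    rw [hX]
    exact Submodule.sum_mem _ fun k _ => Submodule.subset_span ⟨k, rfl⟩
  have hsapp : ∀ i, (∑ k, z k) i = s i := by
    intro i; rw [Finset.sum_apply]
  constructor
  · -- sublattice → card = r
    intro hL
    -- key: each w p, p ∈ T, belongs to X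
    have lemA : ∀ p ∈ T, ∀ Q : Finset (Fin r → ℝ), ∃ u ∈ X,
        (∀ i, 0 ≤ u i ∧ u i ≤ s i) ∧ (∀ i, β i = p → u i = s i) ∧
        (∀ i, β i ∈ Q → β i ≠ p → u i = 0) := by
      intro p hp Q
      induction Q using Finset.induction_on with
      | empty =>
        refine ⟨∑ k, z k, hsX, fun i => ?_, fun i _ => hsapp i, fun i h => absurd h (by simp)⟩
        rw [hsapp]
        exact ⟨(hspos i).le, le_refl _⟩
      | @insert q Q hq ih =>
        obtain ⟨u, huX, hub, hup, hu0⟩ := ih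
        by_cases hqp : q = p
        · refine ⟨u, huX, hub, hup, fun i hi hne => ?_⟩
          rcases Finset.mem_insert.mp hi with h | h
          · exact absurd (h.trans hqp) hne
          · exact hu0 i h hne
        · have hpq : p ≠ q := Ne.symm hqp
          obtain ⟨k, hk⟩ : ∃ k, p k ≠ q k := by
            by_contra h
            push_neg at h
            exact hpq (funext h)
          set v : Fin m → ℝ := (p k - q k)⁻¹ • (z k - q k • (∑ k', z k')) with hv
          have hvX : v ∈ X := by
            exact Submodule.smul_mem _ _ (Submodule.sub_mem _ (hX ▸ Submodule.subset_span ⟨k, rfl⟩) (Submodule.smul_mem _ _ hsX))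
          have hvapp : ∀ i, v i = (p k - q k)⁻¹ * ((β i k - q k) * s i) := by
            intro i
            simp only [hv, Pi.smul_apply, Pi.sub_apply, smul_eq_mul, hsapp]
            rw [hzβ k i]
            ring
          set u' : Fin m → ℝ := (v ⊔ 0) ⊓ (∑ k', z k') with hu'
          have hu'X : u' ∈ X := (hL _ ((hL v hvX 0 X.zero_mem).1) _ hsX).2
          have hu'app : ∀ i, u' i = min (max (v i) 0) (s i) := by
            intro i
            simp [hu', hsapp, max_def, min_def]
          have hu'b : ∀ i, 0 ≤ u' i ∧ u' i ≤ s i := by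
            intro i
            rw [hu'app]
            exact ⟨le_min (le_max_right _ _) (hspos i).le, min_le_right _ _⟩
          have hu'p : ∀ i, β i = p → u' i = s i := by
            intro i hip
            rw [hu'app, hvapp, hip]
            rw [inv_mul_cancel_left₀ (sub_ne_zero.mpr hk)]
            rw [max_eq_left (hspos i).le, min_self]
          have hu'q : ∀ i, β i = q → u' i = 0 := by
            intro i hiq
            rw [hu'app, hvapp, hiq, sub_self, zero_mul, mul_zero]
            rw [max_self, min_eq_left (hspos i).le]
          refine ⟨u ⊓ u', (hL u huX u' hu'X).2, fun i => ?_, fun i hip => ?_, fun i hi hne => ?_⟩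
          · simp only [Pi.inf_apply]
            exact ⟨le_min (hub i).1 (hu'b i).1, (min_le_left _ _).trans (hub i).2⟩
          · simp only [Pi.inf_apply]
            rw [hup i hip, hu'p i hip, min_self]
          · simp only [Pi.inf_apply]
            rcases Finset.mem_insert.mp hi with h | h
            · rw [hu'q i h]
              exact min_eq_right (hub i).1
            · rw [hu0 i h hne]
              exact min_eq_left (hu'b i).1
    have hwX : ∀ p : ↥T, w p.1 ∈ X := by
      intro p
      obtain ⟨u, huX, hub, hup, hu0⟩ := lemA p.1 p.2 T
      have : u = w p.1 := by
        funext i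
        simp only [hw]
        by_cases h : β i = p.1
        · rw [if_pos h]; exact hup i h
        · rw [if_neg h]; exact hu0 i (hmemT i) h
      exact this ▸ huX
    have hYX : Y ≤ X := by
      rw [hY]
      apply Submodule.span_le.2
      rintro _ ⟨p, rfl⟩
      exact hwX p
    have h := Submodule.finrank_mono hYX
    rw [hfinX, hfinY] at h
    omega
  · -- card = r → sublattice
    intro hcard
    have hXeqY : X = Y := by
      apply Submodule.eq_of_le_of_finrank_le hXY
      rw [hfinX, hfinY, hcard]
    intro x hx y hy
    rw [hXeqY] at hx hy ⊢
    rw [hY] at hx hy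
    obtain ⟨a, ha⟩ := Submodule.mem_span_range_iff_exists_fun ℝ |>.mp hx
    obtain ⟨b, hb⟩ := Submodule.mem_span_range_iff_exists_fun ℝ |>.mp hy
    constructor
    · have : x ⊔ y = ∑ p : ↥T, max (a p) (b p) • w p.1 := by
        funext i
        rw [Pi.sup_apply, ← ha, ← hb, hEval, hEval, hEval]
        rw [max_mul_of_nonneg _ _ (hspos i).le]
      rw [this]
      exact Submodule.sum_mem _ fun p _ =>
        Submodule.smul_mem _ _ (Submodule.subset_span ⟨p, rfl⟩)
    · have : x ⊓ y = ∑ p : ↥T, min (a p) (b p) • w p.1 := by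
        funext i
        rw [Pi.inf_apply, ← ha, ← hb, hEval, hEval, hEval]
        rw [min_mul_of_nonneg _ _ (hspos i).le]
      rw [this]
      exact Submodule.sum_mem _ fun p _ =>
        Submodule.smul_mem _ _ (Submodule.subset_span ⟨p, rfl⟩)
end

section
/- The subspace X of ℝ^m generated by linearly independent nonnegative vectors z_1,...,z_r (with everywhere-positive sum) is a lattice-subspace of ℝ^m if and only if the convex hull K of the range of their basic function β is a polytope with exactly r vertices; in that case, if L is the r×r matrix with columns the vertices P_1,...,P_r of K, then the rows of L^{-1}(z_1,...,z_r)^T form a positive basis of X. -/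
section Helpers
variable {m r : ℕ}
open Matrix

lemma cone_mem_iff {X : Submodule ℝ (Fin m → ℝ)} {b : Fin r → Fin m → ℝ}
    (hb : IsPositiveBasis X b) (x : Fin m → ℝ) :
    (x ∈ X ∧ 0 ≤ x) ↔ ∃ c : Fin r → ℝ, (∀ i, 0 ≤ c i) ∧ x = ∑ i, c i • b i := by
  obtain ⟨-, -, hcone⟩ := hb
  constructor
  · intro hx
    have : x ∈ {x : Fin m → ℝ | x ∈ X ∧ 0 ≤ x} := hx
    rw [hcone] at this; exact this
  · intro hx
    have : x ∈ {x : Fin m → ℝ | ∃ c : Fin r → ℝ, (∀ i, 0 ≤ c i) ∧ x = ∑ i, c i • b i} := hx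
    rw [← hcone] at this; exact this

lemma coords_exist {X : Submodule ℝ (Fin m → ℝ)} {b : Fin r → Fin m → ℝ}
    (hspan : Submodule.span ℝ (Set.range b) = X) {x : Fin m → ℝ} (hx : x ∈ X) :
    ∃ c : Fin r → ℝ, x = ∑ i, c i • b i := by
  rw [← hspan] at hx
  obtain ⟨c, hc⟩ := (Submodule.mem_span_range_iff_exists_fun ℝ).1 hx
  exact ⟨c, hc.symm⟩

lemma coords_unique {b : Fin r → Fin m → ℝ} (hli : LinearIndependent ℝ b)
    {c d : Fin r → ℝ} (h : ∑ i, c i • b i = ∑ i, d i • b i) : c = d := by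
  have h0 : ∑ i, (c - d) i • b i = 0 := by
    simp only [Pi.sub_apply, sub_smul, Finset.sum_sub_distrib, h, sub_self]
  have := Fintype.linearIndependent_iff.1 hli (c - d) h0
  funext i
  have hi := this i
  simpa [sub_eq_zero] using hi

lemma bk_mem_cone {X : Submodule ℝ (Fin m → ℝ)} {b : Fin r → Fin m → ℝ}
    (hb : IsPositiveBasis X b) (k : Fin r) : b k ∈ X ∧ 0 ≤ b k := by
  rw [cone_mem_iff hb]
  refine ⟨fun i => if i = k then 1 else 0, fun i => by positivity, ?_⟩
  simp [ite_smul]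

lemma sum_apply' (c : Fin r → ℝ) (b : Fin r → Fin m → ℝ) (j : Fin m) :
    (∑ i, c i • b i) j = ∑ i, c i * b i j := by
  simp [Finset.sum_apply]

lemma latticeOfPositiveBasis {X : Submodule ℝ (Fin m → ℝ)} {b : Fin r → Fin m → ℝ}
    (hb : IsPositiveBasis X b) : IsLatticeSubspace X := by
  obtain ⟨hli, hspan, -⟩ := id hb
  have hbpos : ∀ k, 0 ≤ b k := fun k => (bk_mem_cone hb k).2
  intro x hx y hy
  obtain ⟨lam, hlam⟩ := coords_exist hspan hx
  obtain ⟨mu, hmu⟩ := coords_exist hspan hy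
  have hmemX : ∀ c : Fin r → ℝ, (∑ i, c i • b i) ∈ X := fun c =>
    Submodule.sum_mem X fun k _ => Submodule.smul_mem X _ ((bk_mem_cone hb k).1)
  have hle : ∀ c d : Fin r → ℝ, (∀ i, c i ≤ d i) → (∑ i, c i • b i) ≤ ∑ i, d i • b i := by
    intro c d hcd j
    rw [sum_apply', sum_apply']
    exact Finset.sum_le_sum fun i _ => mul_le_mul_of_nonneg_right (hcd i) (hbpos i j)
  constructor
  · refine ⟨∑ i, max (lam i) (mu i) • b i, hmemX _, ?_, ?_, ?_⟩
    · rw [hlam]; exact hle _ _ fun i => le_max_left _ _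
    · rw [hmu]; exact hle _ _ fun i => le_max_right _ _
    · intro w hw hxw hyw
      obtain ⟨nu, hnu⟩ := coords_exist hspan hw
      have h1 : w - x ∈ X ∧ 0 ≤ w - x := ⟨Submodule.sub_mem X hw hx, by
        intro j; simpa using hxw j⟩
      obtain ⟨c1, hc1pos, hc1⟩ := (cone_mem_iff hb _).1 h1
      have h2 : w - y ∈ X ∧ 0 ≤ w - y := ⟨Submodule.sub_mem X hw hy, by
        intro j; simpa using hyw j⟩
      obtain ⟨c2, hc2pos, hc2⟩ := (cone_mem_iff hb _).1 h2
      have e1 : nu = lam + c1 := by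
        apply coords_unique hli
        have hw' : (∑ i, nu i • b i) = (∑ i, lam i • b i) + ∑ i, c1 i • b i := by
          rw [← hnu, ← hlam, ← hc1]; abel
        rw [hw']
        simp [add_smul, Finset.sum_add_distrib]
      have e2 : nu = mu + c2 := by
        apply coords_unique hli
        have hw' : (∑ i, nu i • b i) = (∑ i, mu i • b i) + ∑ i, c2 i • b i := by
          rw [← hnu, ← hmu, ← hc2]; abel
        rw [hw']
        simp [add_smul, Finset.sum_add_distrib]
      rw [hnu]
      refine hle _ _ fun i => max_le ?_ ?_
      · rw [e1]; simpa using hc1pos i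
      · rw [e2]; simpa using hc2pos i
  · refine ⟨∑ i, min (lam i) (mu i) • b i, hmemX _, ?_, ?_, ?_⟩
    · rw [hlam]; exact hle _ _ fun i => min_le_left _ _
    · rw [hmu]; exact hle _ _ fun i => min_le_right _ _
    · intro w hw hwx hwy
      obtain ⟨nu, hnu⟩ := coords_exist hspan hw
      have h1 : x - w ∈ X ∧ 0 ≤ x - w := ⟨Submodule.sub_mem X hx hw, by
        intro j; simpa using hwx j⟩
      obtain ⟨c1, hc1pos, hc1⟩ := (cone_mem_iff hb _).1 h1
      have h2 : y - w ∈ X ∧ 0 ≤ y - w := ⟨Submodule.sub_mem X hy hw, by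
        intro j; simpa using hwy j⟩
      obtain ⟨c2, hc2pos, hc2⟩ := (cone_mem_iff hb _).1 h2
      have e1 : lam = nu + c1 := by
        apply coords_unique hli
        have hw' : (∑ i, lam i • b i) = (∑ i, nu i • b i) + ∑ i, c1 i • b i := by
          rw [← hlam, ← hnu, ← hc1]; abel
        rw [hw']
        simp [add_smul, Finset.sum_add_distrib]
      have e2 : mu = nu + c2 := by
        apply coords_unique hli
        have hw' : (∑ i, mu i • b i) = (∑ i, nu i • b i) + ∑ i, c2 i • b i := by
          rw [← hmu, ← hnu, ← hc2]; abel
        rw [hw']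
        simp [add_smul, Finset.sum_add_distrib]
      rw [hnu]
      refine hle _ _ fun i => le_min ?_ ?_
      · rw [e1]; simpa using hc1pos i
      · rw [e2]; simpa using hc2pos i


lemma beta_span (z : Fin r → Fin m → ℝ) (hsum : ∀ i, 0 < ∑ k, z k i)
    (hind : LinearIndependent ℝ z)
    (β : Fin m → Fin r → ℝ) (hβ : ∀ i k, β i k = z k i / ∑ k', z k' i) :
    Submodule.span ℝ (Set.range β) = ⊤ := by
  by_contra h
  obtain ⟨f, hf0, hfbot⟩ :=
    Submodule.exists_dual_map_eq_bot_of_lt_top (lt_top_iff_ne_top.2 h) inferInstance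
  have hfβ : ∀ i, f (β i) = 0 := by
    intro i
    have h1 : f (β i) ∈ Submodule.map f (Submodule.span ℝ (Set.range β)) :=
      Submodule.mem_map_of_mem (Submodule.subset_span (Set.mem_range_self i))
    rw [hfbot] at h1
    simpa using h1
  set c : Fin r → ℝ := fun k => f (fun j => if k = j then 1 else 0) with hc
  have hrepr : ∀ q : Fin r → ℝ, f q = ∑ k, q k * c k := by
    intro q
    rw [LinearMap.pi_apply_eq_sum_univ f q]
    simp [hc, smul_eq_mul]
  have hz0 : ∀ i, ∑ k, c k * z k i = 0 := by
    intro i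
    have h1 := hfβ i
    rw [hrepr] at h1
    have h3 : ∑ k, β i k * c k = (∑ k, c k * z k i) / (∑ k', z k' i) := by
      rw [Finset.sum_div]
      refine Finset.sum_congr rfl fun k _ => ?_
      rw [hβ i k]; ring
    rw [h3] at h1
    exact (div_eq_zero_iff.1 h1).resolve_right (hsum i).ne'
  have hcz : c = 0 := by
    funext k
    refine Fintype.linearIndependent_iff.1 hind c ?_ k
    funext i
    simpa [Finset.sum_apply] using hz0 i
  apply hf0
  apply LinearMap.ext
  intro q
  rw [hrepr q, hcz]
  simp

lemma positiveBasis_of_P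
    (z : Fin r → Fin m → ℝ) (hpos : ∀ k i, 0 ≤ z k i)
    (hsum : ∀ i, 0 < ∑ k, z k i) (hind : LinearIndependent ℝ z)
    (β : Fin m → Fin r → ℝ) (hβ : ∀ i k, β i k = z k i / ∑ k', z k' i)
    (X : Submodule ℝ (Fin m → ℝ)) (hX : X = Submodule.span ℝ (Set.range z))
    (P : Fin r → Fin r → ℝ)
    (hPrange : Set.range P = (convexHull ℝ (Set.range β)).extremePoints ℝ) :
    IsPositiveBasis X
      (fun k => (((Matrix.of fun s t => P t s)⁻¹ : Matrix (Fin r) (Fin r) ℝ) *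
        (Matrix.of fun s => z s : Matrix (Fin r) (Fin m) ℝ)) k) := by
  classical
  set K := convexHull ℝ (Set.range β) with hK
  set L : Matrix (Fin r) (Fin r) ℝ := Matrix.of fun s t => P t s with hL
  set N : Matrix (Fin r) (Fin r) ℝ := L⁻¹ with hN
  set Z : Matrix (Fin r) (Fin m) ℝ := Matrix.of fun s => z s with hZ
  set b : Fin r → Fin m → ℝ := fun k => (N * Z) k with hb
  show IsPositiveBasis X b
  have hzi : ∀ t i, z t i = β i t * ∑ k', z k' i := by
    intro t i
    rw [hβ i t, div_mul_cancel₀]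
    exact (hsum i).ne'
  have hextβ : K.extremePoints ℝ ⊆ Set.range β := extremePoints_convexHull_subset
  have hPβ : ∀ t, ∃ i, β i = P t := fun t => hextβ (hPrange ▸ Set.mem_range_self t)
  choose iT hiT using hPβ
  have hKP : K = convexHull ℝ (Set.range P) := by
    have h1 := closure_convexHull_extremePoints
      ((Set.finite_range β).isCompact_convexHull ℝ) (convex_convexHull ℝ (Set.range β))
    rw [← hPrange, IsClosed.closure_eq ((Set.finite_range P).isClosed_convexHull ℝ)] at h1
    exact h1.symm
  have hPli : LinearIndependent ℝ P := by
    apply linearIndependent_of_top_le_span_of_card_eq_finrank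
    · have hsub : Set.range β ⊆ (Submodule.span ℝ (Set.range P) : Set (Fin r → ℝ)) := by
        intro x hx
        have hxK : x ∈ K := subset_convexHull ℝ _ hx
        rw [hKP] at hxK
        exact convexHull_min Submodule.subset_span
          (Submodule.span ℝ (Set.range P)).convex hxK
      rw [← beta_span z hsum hind β hβ]
      exact Submodule.span_le.2 hsub
    · simp [Module.finrank_fintype_fun_eq_card]
  have hLdet : IsUnit L.det := by
    rw [← Matrix.isUnit_iff_isUnit_det, ← Matrix.isUnit_transpose]
    exact Matrix.linearIndependent_rows_iff_isUnit.mp hPli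
  have hNL : N * L = 1 := Matrix.nonsing_inv_mul L hLdet
  have hLN : L * N = 1 := Matrix.mul_nonsing_inv L hLdet
  have hbiT : ∀ k t, b k (iT t) = if k = t then (∑ k', z k' (iT t)) else 0 := by
    intro k t
    have h1 : b k (iT t) = ∑ s, N k s * z s (iT t) := by
      simp [hb, Matrix.mul_apply, hZ]
    have h2 : ∀ s, z s (iT t) = L s t * ∑ k', z k' (iT t) := by
      intro s
      rw [hzi s (iT t), hiT t]
      rfl
    rw [h1]
    calc ∑ s, N k s * z s (iT t)
        = (∑ s, N k s * L s t) * ∑ k', z k' (iT t) := by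
          rw [Finset.sum_mul]
          exact Finset.sum_congr rfl fun s _ => by rw [h2 s]; ring
      _ = (1 : Matrix (Fin r) (Fin r) ℝ) k t * ∑ k', z k' (iT t) := by
          rw [← Matrix.mul_apply, hNL]
      _ = if k = t then (∑ k', z k' (iT t)) else 0 := by
          rw [Matrix.one_apply]
          split <;> simp
  have hbnn : ∀ k i, 0 ≤ b k i := by
    intro k i
    have hβK : β i ∈ convexHull ℝ (Set.range P) := by
      rw [← hKP]; exact subset_convexHull ℝ _ (Set.mem_range_self i)
    rw [convexHull_range_eq_exists_affineCombination] at hβK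
    obtain ⟨s, w, hw0, hw1, hws⟩ := hβK
    rw [Finset.affineCombination_eq_linear_combination s P w hw1] at hws
    set θ : Fin r → ℝ := fun t => if t ∈ s then w t else 0 with hθ
    have hθ0 : ∀ t, 0 ≤ θ t := by
      intro t
      by_cases h : t ∈ s
      · simpa [hθ, h] using hw0 t h
      · simp [hθ, h]
    have hβv : β i = L.mulVec θ := by
      funext t'
      have e1 : β i t' = ∑ t ∈ s, w t * P t t' := by
        rw [← hws]; simp [Finset.sum_apply]
      have e2 : ∑ t, θ t * P t t' = ∑ t ∈ s, w t * P t t' := by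
        rw [← Finset.sum_subset (Finset.subset_univ s)
          (fun t _ hts => by simp [hθ, hts])]
        exact Finset.sum_congr rfl fun t ht => by simp [hθ, ht]
      rw [e1, ← e2]
      simp [Matrix.mulVec, dotProduct, hL, mul_comm]
    have hbi : b k i = (∑ k', z k' i) * θ k := by
      have h1 : b k i = ∑ s', N k s' * z s' i := by
        simp [hb, Matrix.mul_apply, hZ]
      have h2 : ∀ s', z s' i = (∑ k', z k' i) * (L.mulVec θ) s' := by
        intro s'
        rw [hzi s' i, hβv]
        ring
      rw [h1]
      calc ∑ s', N k s' * z s' i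
          = (∑ k', z k' i) * ∑ s', N k s' * (L.mulVec θ) s' := by
            rw [Finset.mul_sum]
            exact Finset.sum_congr rfl fun s' _ => by rw [h2 s']; ring
        _ = (∑ k', z k' i) * (N.mulVec (L.mulVec θ)) k := by
            simp [Matrix.mulVec, dotProduct]
        _ = (∑ k', z k' i) * θ k := by
            rw [Matrix.mulVec_mulVec, hNL, Matrix.one_mulVec]
    rw [hbi]
    exact mul_nonneg (hsum i).le (hθ0 k)
  have hli : LinearIndependent ℝ b := by
    rw [Fintype.linearIndependent_iff]
    intro g hg t
    have h1 := congrFun hg (iT t)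
    rw [sum_apply'] at h1
    have h2 : ∑ k, g k * b k (iT t)
        = ∑ k, g k * (if k = t then (∑ k', z k' (iT t)) else 0) :=
      Finset.sum_congr rfl fun k _ => by rw [hbiT k t]
    rw [h2] at h1
    simp only [mul_ite, mul_zero, Finset.sum_ite_eq', Finset.mem_univ, if_true,
      Pi.zero_apply] at h1
    exact (mul_eq_zero.1 h1).resolve_right (hsum (iT t)).ne'
  have hbX : ∀ k, b k ∈ Submodule.span ℝ (Set.range z) := by
    intro k
    have e : b k = ∑ s', N k s' • z s' := by
      funext i
      rw [sum_apply']
      simp [hb, Matrix.mul_apply, hZ]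
    rw [e]
    exact Submodule.sum_mem _ fun s' _ =>
      Submodule.smul_mem _ _ (Submodule.subset_span (Set.mem_range_self s'))
  have hzspan : ∀ t, z t ∈ Submodule.span ℝ (Set.range b) := by
    intro t
    have e : z t = ∑ s', L t s' • b s' := by
      funext i
      rw [sum_apply']
      have h1 : ∑ s', L t s' * b s' i = (L * (N * Z)) t i := by
        rw [Matrix.mul_apply]
      rw [h1, ← Matrix.mul_assoc, hLN, Matrix.one_mul]
      rfl
    rw [e]
    exact Submodule.sum_mem _ fun s' _ =>
      Submodule.smul_mem _ _ (Submodule.subset_span (Set.mem_range_self s'))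
  have hspanb : Submodule.span ℝ (Set.range b) = X := by
    rw [hX]
    apply le_antisymm
    · rw [Submodule.span_le]; rintro x ⟨k, rfl⟩; exact hbX k
    · rw [Submodule.span_le]; rintro x ⟨t, rfl⟩; exact hzspan t
  refine ⟨hli, hspanb, ?_⟩
  ext x
  simp only [Set.mem_setOf_eq]
  constructor
  · rintro ⟨hxX, hx0⟩
    obtain ⟨c, hc⟩ := coords_exist hspanb hxX
    refine ⟨c, fun t => ?_, hc⟩
    have h1 : x (iT t) = c t * ∑ k', z k' (iT t) := by
      rw [hc, sum_apply']
      rw [Finset.sum_congr rfl fun k _ => by rw [hbiT k t]]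
      simp
    have h2 : 0 ≤ x (iT t) := hx0 (iT t)
    rw [h1] at h2
    exact (mul_nonneg_iff_of_pos_right (hsum (iT t))).1 h2
  · rintro ⟨c, hc0, rfl⟩
    constructor
    · exact Submodule.sum_mem _ fun k _ => Submodule.smul_mem _ _
        (hspanb ▸ Submodule.subset_span (Set.mem_range_self k))
    · intro j
      rw [Pi.zero_apply, sum_apply']
      exact Finset.sum_nonneg fun k _ => mul_nonneg (hc0 k) (hbnn k j)


lemma mem_convexHull_range_decomp {q n : ℕ} (Q : Fin n → Fin q → ℝ) {x : Fin q → ℝ}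
    (hx : x ∈ convexHull ℝ (Set.range Q)) :
    ∃ θ : Fin n → ℝ, (∀ t, 0 ≤ θ t) ∧ ∑ t, θ t = 1 ∧ x = ∑ t, θ t • Q t := by
  classical
  rw [convexHull_range_eq_exists_affineCombination] at hx
  obtain ⟨s, w, hw0, hw1, hws⟩ := hx
  rw [Finset.affineCombination_eq_linear_combination s Q w hw1] at hws
  refine ⟨fun t => if t ∈ s then w t else 0, fun t => ?_, ?_, ?_⟩
  · by_cases h : t ∈ s
    · simpa [h] using hw0 t h
    · simp [h]
  · rw [← Finset.sum_subset (Finset.subset_univ s)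
      (fun t _ hts => by simp [hts] : ∀ t ∈ Finset.univ, t ∉ s →
        (if t ∈ s then w t else 0) = 0)]
    rw [← hw1]
    exact Finset.sum_congr rfl fun t ht => by simp [ht]
  · rw [← hws]
    rw [← Finset.sum_subset (Finset.subset_univ s)
      (fun t _ hts => by simp [hts] : ∀ t ∈ Finset.univ, t ∉ s →
        (if t ∈ s then w t else 0) • Q t = 0)]
    exact Finset.sum_congr rfl fun t ht => by simp [ht]

lemma extremePoints_convexHull_li {q n : ℕ} (Q : Fin n → Fin q → ℝ)
    (hQ : LinearIndependent ℝ Q) :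
    (convexHull ℝ (Set.range Q)).extremePoints ℝ = Set.range Q := by
  classical
  apply Set.Subset.antisymm extremePoints_convexHull_subset
  rintro x ⟨t, rfl⟩
  rw [mem_extremePoints]
  refine ⟨subset_convexHull ℝ _ (Set.mem_range_self t), ?_⟩
  intro x₁ hx₁ x₂ hx₂ hseg
  obtain ⟨θ₁, hθ₁0, hθ₁1, he₁⟩ := mem_convexHull_range_decomp Q hx₁
  obtain ⟨θ₂, hθ₂0, hθ₂1, he₂⟩ := mem_convexHull_range_decomp Q hx₂
  obtain ⟨α, γ, hα, hγ, hαγ, habe⟩ := hseg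
  have hQt : Q t = ∑ s, (α * θ₁ s + γ * θ₂ s) • Q s := by
    rw [← habe, he₁, he₂]
    rw [Finset.smul_sum, Finset.smul_sum, ← Finset.sum_add_distrib]
    exact Finset.sum_congr rfl fun s _ => by
      rw [smul_smul, smul_smul, ← add_smul]
  have hQt' : ∑ s, (if s = t then (1 : ℝ) else 0) • Q s = ∑ s, (α * θ₁ s + γ * θ₂ s) • Q s := by
    rw [← hQt]
    simp [ite_smul]
  have hco := coords_unique hQ hQt'
  have hzero : ∀ s, s ≠ t → θ₁ s = 0 ∧ θ₂ s = 0 := by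
    intro s hst
    have h1 := congrFun hco s
    simp only [if_neg hst] at h1
    constructor
    · nlinarith [hθ₁0 s, hθ₂0 s, mul_nonneg hγ.le (hθ₂0 s)]
    · nlinarith [hθ₁0 s, hθ₂0 s, mul_nonneg hα.le (hθ₁0 s)]
  have hx₁t : θ₁ t = 1 := by
    have : ∑ s, θ₁ s = θ₁ t := by
      apply Finset.sum_eq_single
      · intro s _ hst; exact (hzero s hst).1
      · intro h; exact absurd (Finset.mem_univ t) h
    rw [← hθ₁1, this]
  have hx₂t : θ₂ t = 1 := by
    have : ∑ s, θ₂ s = θ₂ t := by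
      apply Finset.sum_eq_single
      · intro s _ hst; exact (hzero s hst).2
      · intro h; exact absurd (Finset.mem_univ t) h
    rw [← hθ₂1, this]
  constructor
  · rw [he₁]
    rw [Finset.sum_eq_single t]
    · rw [hx₁t, one_smul]
    · intro s _ hst; rw [(hzero s hst).1, zero_smul]
    · intro h; exact absurd (Finset.mem_univ t) h
  · rw [he₂]
    rw [Finset.sum_eq_single t]
    · rw [hx₂t, one_smul]
    · intro s _ hst; rw [(hzero s hst).2, zero_smul]
    · intro h; exact absurd (Finset.mem_univ t) h


lemma ncard_extremePoints_of_positiveBasis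
    (z : Fin r → Fin m → ℝ) (hpos : ∀ k i, 0 ≤ z k i)
    (hsum : ∀ i, 0 < ∑ k, z k i) (hind : LinearIndependent ℝ z)
    (β : Fin m → Fin r → ℝ) (hβ : ∀ i k, β i k = z k i / ∑ k', z k' i)
    (X : Submodule ℝ (Fin m → ℝ)) (hX : X = Submodule.span ℝ (Set.range z))
    (b : Fin r → Fin m → ℝ) (hb : IsPositiveBasis X b) :
    ((convexHull ℝ (Set.range β)).extremePoints ℝ).ncard = r := by
  classical
  obtain ⟨hbli, hbspan, -⟩ := id hb
  have hbpos : ∀ k, 0 ≤ b k := fun k => (bk_mem_cone hb k).2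
  have hbX : ∀ k, b k ∈ X := fun k => (bk_mem_cone hb k).1
  have hzX : ∀ k, z k ∈ X := fun k => hX ▸ Submodule.subset_span (Set.mem_range_self k)
  -- coefficients of z in terms of b
  have hza : ∀ k, ∃ c : Fin r → ℝ, (∀ t, 0 ≤ c t) ∧ z k = ∑ t, c t • b t := by
    intro k
    exact (cone_mem_iff hb (z k)).1 ⟨hzX k, fun i => hpos k i⟩
  choose a ha0 haz using hza
  -- surjectivity of c ↦ c ᵥ* A
  have hsurj : ∀ d : Fin r → ℝ, ∃ c : Fin r → ℝ, ∀ t, d t = ∑ k, c k * a k t := by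
    intro d
    have hv : (∑ t, d t • b t) ∈ X :=
      Submodule.sum_mem _ fun t _ => Submodule.smul_mem _ _ (hbX t)
    obtain ⟨c, hc⟩ := coords_exist hX.symm hv
    have he : ∑ k, c k • z k = ∑ t, (∑ k, c k * a k t) • b t := by
      calc ∑ k, c k • z k = ∑ k, ∑ t, (c k * a k t) • b t := by
            refine Finset.sum_congr rfl fun k _ => ?_
            rw [haz k, Finset.smul_sum]
            exact Finset.sum_congr rfl fun t _ => smul_smul _ _ _
        _ = ∑ t, ∑ k, (c k * a k t) • b t := Finset.sum_comm
        _ = ∑ t, (∑ k, c k * a k t) • b t := by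
            refine Finset.sum_congr rfl fun t _ => ?_
            rw [Finset.sum_smul]
    have h2 := hc.trans he
    have h3 := coords_unique hbli h2
    exact ⟨c, fun t => congrFun h3 t⟩
  -- the matrix A is invertible
  set Amat : Matrix (Fin r) (Fin r) ℝ := Matrix.of a with hAmat
  have hAunit : IsUnit Amat := by
    rw [← Matrix.vecMul_surjective_iff_isUnit]
    intro d
    obtain ⟨c, hc⟩ := hsurj d
    refine ⟨c, ?_⟩
    funext t
    simp only [Matrix.vecMul, dotProduct, hAmat, Matrix.of_apply]
    exact (hc t).symm
  have hAinj : Function.Injective Amat.mulVec := Matrix.mulVec_injective_iff_isUnit.2 hAunit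
  -- column sums are positive
  set σ : Fin r → ℝ := fun t => ∑ k, a k t with hσ
  have hσpos : ∀ t, 0 < σ t := by
    intro t
    rcases lt_or_eq_of_le (Finset.sum_nonneg fun k _ => ha0 k t : (0:ℝ) ≤ σ t) with h | h
    · exact h
    · exfalso
      have hall : ∀ k, a k t = 0 := by
        intro k
        have := (Finset.sum_eq_zero_iff_of_nonneg (fun k _ => ha0 k t)).1 h.symm
        exact this k (Finset.mem_univ k)
      obtain ⟨c, hc⟩ := hsurj (fun s => if s = t then 1 else 0)
      have h1 := hc t
      simp [hall] at h1
  -- the candidate vertices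
  set Q : Fin r → Fin r → ℝ := fun t k => a k t / σ t with hQ
  -- Q is linearly independent
  have hQli : LinearIndependent ℝ Q := by
    rw [Fintype.linearIndependent_iff]
    intro g hg t
    have hmv : Amat.mulVec (fun t => g t / σ t) = Amat.mulVec 0 := by
      rw [Matrix.mulVec_zero]
      funext k
      have h1 := congrFun hg k
      rw [sum_apply'] at h1
      simp only [Pi.zero_apply] at h1
      simp only [Matrix.mulVec, dotProduct, hAmat, Matrix.of_apply, Pi.zero_apply]
      rw [← h1]
      refine Finset.sum_congr rfl fun s _ => ?_
      rw [hQ]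
      ring
    have hd := congrFun (hAinj hmv) t
    simp only [Pi.zero_apply] at hd
    rcases div_eq_zero_iff.1 hd with h | h
    · exact h
    · exact absurd h (hσpos t).ne'
  -- for each t there is a coordinate where only b t is nonzero
  have hspec : ∀ t, ∃ i, 0 < b t i ∧ ∀ s, s ≠ t → b s i = 0 := by
    intro t
    by_contra hcon
    push_neg at hcon
    set g : Fin m → ℝ := ∑ s ∈ Finset.univ.erase t, b s with hgdef
    have hgi : ∀ i, g i = ∑ s ∈ Finset.univ.erase t, b s i := by
      intro i; rw [hgdef]; exact Finset.sum_apply i _ _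
    have hgnn : ∀ i, 0 ≤ g i := by
      intro i; rw [hgi]; exact Finset.sum_nonneg fun s _ => hbpos s i
    have hgpos : ∀ i, 0 < b t i → 0 < g i := by
      intro i hbi
      obtain ⟨s, hst, hbs⟩ := hcon i hbi
      have h1 : 0 < b s i := lt_of_le_of_ne (hbpos s i) (Ne.symm hbs)
      have h2 : b s i ≤ g i := by
        rw [hgi]
        exact Finset.single_le_sum (fun s _ => hbpos s i)
          (Finset.mem_erase.2 ⟨hst, Finset.mem_univ s⟩)
      linarith
    set S : Finset (Fin m) := Finset.univ.filter (fun i => 0 < b t i) with hSdef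
    have hSne : S.Nonempty := by
      by_contra hSe
      apply hbli.ne_zero t
      funext i
      have hiS : i ∉ S := fun h => hSe ⟨i, h⟩
      rw [hSdef] at hiS
      simp only [Finset.mem_filter, Finset.mem_univ, true_and, not_lt] at hiS
      exact le_antisymm hiS (hbpos t i)
    set δ : ℝ := S.inf' hSne (fun i => g i / b t i) with hδdef
    have hδpos : 0 < δ := by
      rw [hδdef, Finset.lt_inf'_iff]
      intro i hi
      have hbti : 0 < b t i := by
        rw [hSdef] at hi
        simpa using hi
      exact div_pos (hgpos i hbti) hbti
    have hxX : g - δ • b t ∈ X :=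
      Submodule.sub_mem X (Submodule.sum_mem X fun s _ => hbX s)
        (Submodule.smul_mem X δ (hbX t))
    have hx0 : (0 : Fin m → ℝ) ≤ g - δ • b t := by
      intro i
      simp only [Pi.sub_apply, Pi.smul_apply, smul_eq_mul, Pi.zero_apply]
      by_cases hbti : 0 < b t i
      · have hiS : i ∈ S := by rw [hSdef]; simp [hbti]
        have h1 : δ ≤ g i / b t i := Finset.inf'_le _ hiS
        have h2 : δ * b t i ≤ g i := (le_div_iff₀ hbti).1 h1
        linarith
      · have hbti0 : b t i = 0 := le_antisymm (not_lt.1 hbti) (hbpos t i)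
        rw [hbti0]
        simpa using hgnn i
    obtain ⟨c, hc0, hcx⟩ := (cone_mem_iff hb _).1 ⟨hxX, hx0⟩
    have hrep : g - δ • b t = ∑ s, (if s = t then -δ else 1) • b s := by
      funext i
      rw [sum_apply']
      rw [← Finset.sum_erase_add _ _ (Finset.mem_univ t)]
      have e1 : ∑ s ∈ Finset.univ.erase t, (if s = t then -δ else (1:ℝ)) * b s i
          = ∑ s ∈ Finset.univ.erase t, b s i :=
        Finset.sum_congr rfl fun s hs => by rw [if_neg (Finset.mem_erase.1 hs).1, one_mul]
      rw [e1, if_pos rfl]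
      simp only [Pi.sub_apply, Pi.smul_apply, smul_eq_mul]
      rw [hgi]
      ring
    have hceq := coords_unique hbli (hcx.symm.trans hrep)
    have hct := hc0 t
    rw [hceq] at hct
    norm_num at hct
    linarith
  choose iT hiT1 hiT2 using hspec
  -- the coordinate sum in terms of b
  have hzsum_b : ∀ i, ∑ k, z k i = ∑ t, σ t * b t i := by
    intro i
    calc ∑ k, z k i = ∑ k, ∑ t, a k t * b t i := by
          refine Finset.sum_congr rfl fun k _ => ?_
          rw [haz k, sum_apply']
      _ = ∑ t, ∑ k, a k t * b t i := Finset.sum_comm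
      _ = ∑ t, σ t * b t i := by
          refine Finset.sum_congr rfl fun t _ => ?_
          rw [hσ, Finset.sum_mul]
  -- β at the special indices gives Q
  have hβQ : ∀ t, β (iT t) = Q t := by
    intro t
    funext k
    rw [hβ]
    have h1 : z k (iT t) = a k t * b t (iT t) := by
      have h0 := congrFun (haz k) (iT t)
      rw [sum_apply'] at h0
      rw [h0, Finset.sum_eq_single t]
      · intro s _ hst
        rw [hiT2 t s hst, mul_zero]
      · intro h; exact absurd (Finset.mem_univ t) h
    have h2 : ∑ k', z k' (iT t) = σ t * b t (iT t) := by
      rw [hzsum_b, Finset.sum_eq_single t]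
      · intro s _ hst
        rw [hiT2 t s hst, mul_zero]
      · intro h; exact absurd (Finset.mem_univ t) h
    rw [h1, h2, hQ]
    exact mul_div_mul_right _ _ (hiT1 t).ne'
  -- every β i is in the hull of the Q's
  have hγmem : ∀ i, β i ∈ convexHull ℝ (Set.range Q) := by
    intro i
    set γ : Fin r → ℝ := fun t => σ t * b t i / (∑ k, z k i) with hγ
    have hγ0 : ∀ t, 0 ≤ γ t := fun t =>
      div_nonneg (mul_nonneg (hσpos t).le (hbpos t i)) (hsum i).le
    have hγ1 : ∑ t, γ t = 1 := by
      rw [hγ, ← Finset.sum_div, ← hzsum_b, div_self (hsum i).ne']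
    have hβγ : β i = ∑ t, γ t • Q t := by
      funext k
      rw [sum_apply', hβ]
      have e1 : ∀ t, γ t * Q t k = a k t * b t i / (∑ k', z k' i) := by
        intro t
        have hn1 : σ t ≠ 0 := (hσpos t).ne'
        have hn2 : (∑ k', z k' i) ≠ 0 := (hsum i).ne'
        rw [hγ, hQ]
        field_simp
      rw [Finset.sum_congr rfl fun t _ => e1 t, ← Finset.sum_div]
      congr 1
      have h0 := congrFun (haz k) i
      rw [sum_apply'] at h0
      exact h0
    rw [convexHull_range_eq_exists_affineCombination]
    refine ⟨Finset.univ, γ, fun t _ => hγ0 t, by simpa using hγ1, ?_⟩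
    rw [Finset.affineCombination_eq_linear_combination _ _ _ (by simpa using hγ1)]
    exact hβγ.symm
  have hKQ : convexHull ℝ (Set.range β) = convexHull ℝ (Set.range Q) := by
    apply Set.Subset.antisymm
    · exact convexHull_min (fun x hx => by
        obtain ⟨i, rfl⟩ := hx
        exact hγmem i) (convex_convexHull ℝ _)
    · apply convexHull_mono
      rintro x ⟨t, rfl⟩
      exact ⟨iT t, hβQ t⟩
  rw [hKQ, extremePoints_convexHull_li Q hQli]
  rw [← Set.image_univ, Set.ncard_image_of_injective _ hQli.injective, Set.ncard_univ,
    Nat.card_eq_fintype_card, Fintype.card_fin]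


lemma exists_positiveBasis_of_lattice
    (z : Fin r → Fin m → ℝ) (hind : LinearIndependent ℝ z)
    (X : Submodule ℝ (Fin m → ℝ)) (hX : X = Submodule.span ℝ (Set.range z))
    (hlat : IsLatticeSubspace X) :
    ∃ b : Fin r → Fin m → ℝ, IsPositiveBasis X b := by
  classical
  set B : Set (Fin m → ℝ) := {x | x ∈ X ∧ 0 ≤ x ∧ ∑ i, x i = 1} with hBdef
  have hBconv : Convex ℝ B := by
    rintro x ⟨hxX, hx0, hx1⟩ y ⟨hyX, hy0, hy1⟩ p q hp hq hpq
    refine ⟨Submodule.add_mem X (Submodule.smul_mem X p hxX) (Submodule.smul_mem X q hyX),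
      ?_, ?_⟩
    · intro i
      have := add_nonneg (mul_nonneg hp (hx0 i)) (mul_nonneg hq (hy0 i))
      simpa using this
    · calc ∑ i, (p • x + q • y) i = ∑ i, (p * x i + q * y i) := rfl
        _ = p * ∑ i, x i + q * ∑ i, y i := by
            rw [Finset.sum_add_distrib, Finset.mul_sum, Finset.mul_sum]
        _ = 1 := by rw [hx1, hy1]; linarith
  have hBclosed : IsClosed B := by
    have h1 : IsClosed (X : Set (Fin m → ℝ)) := Submodule.closed_of_finiteDimensional X
    have h2 : IsClosed {x : Fin m → ℝ | 0 ≤ x} := isClosed_Ici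
    have h3 : IsClosed {x : Fin m → ℝ | ∑ i, x i = 1} :=
      isClosed_eq (by continuity) continuous_const
    have he : B = (X : Set _) ∩ ({x | 0 ≤ x} ∩ {x | ∑ i, x i = 1}) := by
      ext x
      simp only [hBdef, Set.mem_setOf_eq, Set.mem_inter_iff, SetLike.mem_coe]
    rw [he]
    exact h1.inter (h2.inter h3)
  have hBsub : B ⊆ Set.Icc (0 : Fin m → ℝ) 1 := by
    rintro x ⟨hxX, hx0, hx1⟩
    refine ⟨hx0, ?_⟩
    intro i
    have h1 : x i ≤ ∑ j, x j := Finset.single_le_sum (fun j _ => hx0 j) (Finset.mem_univ i)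
    rw [hx1] at h1
    exact h1
  have hBcompact : IsCompact B := (isCompact_Icc).of_isClosed_subset hBclosed hBsub
  set E : Set (Fin m → ℝ) := B.extremePoints ℝ with hEdef
  have hEB : E ⊆ B := extremePoints_subset
  have hnorm : ∀ v, v ∈ X → 0 ≤ v → v ≠ 0 → 0 < ∑ i, v i ∧ (∑ i, v i)⁻¹ • v ∈ B := by
    intro v hvX hv0 hvne
    have hvpos : 0 < ∑ i, v i := by
      obtain ⟨i, hi⟩ := Function.ne_iff.1 hvne
      exact Finset.sum_pos' (fun j _ => hv0 j)
        ⟨i, Finset.mem_univ i, lt_of_le_of_ne (hv0 i) (Ne.symm hi)⟩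
    refine ⟨hvpos, Submodule.smul_mem X _ hvX, fun i => mul_nonneg (inv_nonneg.2 hvpos.le) (hv0 i), ?_⟩
    calc ∑ i, ((∑ j, v j)⁻¹ • v) i = ∑ i, (∑ j, v j)⁻¹ * v i := rfl
      _ = (∑ j, v j)⁻¹ * ∑ i, v i := by rw [Finset.mul_sum]
      _ = 1 := inv_mul_cancel₀ hvpos.ne'
  have hscal : ∀ p ∈ E, ∀ q, q ∈ X → 0 ≤ q → q ≤ p → q = (∑ i, q i) • p := by
    intro p hp q hqX hq0 hqp
    obtain ⟨hpB, hpext⟩ := mem_extremePoints.1 hp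
    obtain ⟨hpX, hp0, hp1⟩ := hpB
    by_cases hq : q = 0
    · rw [hq]
      simp
    · by_cases hpq : p - q = 0
      · have hqp' : q = p := by rw [sub_eq_zero] at hpq; exact hpq.symm
        rw [hqp', hp1, one_smul]
      · obtain ⟨hα, hαB⟩ := hnorm q hqX hq0 hq
        have hpmqX : p - q ∈ X := Submodule.sub_mem X hpX hqX
        have hpmq0 : 0 ≤ p - q := fun i => by simpa using hqp i
        obtain ⟨hα', hα'B⟩ := hnorm (p - q) hpmqX hpmq0 hpq
        have hsum1 : (∑ i, q i) + (∑ i, (p - q) i) = 1 := by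
          have h1 : ∑ i, (p - q) i = ∑ i, p i - ∑ i, q i := by
            rw [← Finset.sum_sub_distrib]; rfl
          rw [h1, hp1]; ring
        have hseg : p ∈ openSegment ℝ ((∑ i, q i)⁻¹ • q) ((∑ i, (p - q) i)⁻¹ • (p - q)) := by
          refine ⟨∑ i, q i, ∑ i, (p - q) i, hα, hα', hsum1, ?_⟩
          rw [smul_smul, smul_smul, mul_inv_cancel₀ hα.ne', mul_inv_cancel₀ hα'.ne',
            one_smul, one_smul]
          abel
        have h1 := (hpext _ hαB _ hα'B hseg).1
        have h2 := congrArg (fun y => (∑ i, q i) • y) h1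
        rw [smul_smul, mul_inv_cancel₀ hα.ne', one_smul] at h2
        exact h2
  have hdisj : ∀ u ∈ E, ∀ v ∈ E, u ≠ v → ∀ w ∈ X, w ≤ u → w ≤ v → w ≤ 0 := by
    intro u hu v hv huv w hwX hwu hwv
    obtain ⟨huX, hu0, hu1⟩ := hEB hu
    obtain ⟨hvX, hv0, hv1⟩ := hEB hv
    obtain ⟨-, z₀, hz₀X, hz₀u, hz₀v, hz₀g⟩ := hlat u huX v hvX
    have hwz := hz₀g w hwX hwu hwv
    have hz₀0 : (0 : Fin m → ℝ) ≤ z₀ := hz₀g 0 (Submodule.zero_mem X) hu0 hv0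
    have he1 : z₀ = (∑ i, z₀ i) • u := hscal u hu z₀ hz₀X hz₀0 hz₀u
    have he2 : z₀ = (∑ i, z₀ i) • v := hscal v hv z₀ hz₀X hz₀0 hz₀v
    by_cases hs : (∑ i, z₀ i) = 0
    · have hz0 : z₀ = 0 := by rw [he1, hs, zero_smul]
      rw [hz0] at hwz
      exact hwz
    · exfalso
      apply huv
      exact smul_right_injective (Fin m → ℝ) hs (he1.symm.trans he2)
  have hdisj_smul : ∀ u, u ∈ X → 0 ≤ u → ∀ v, v ∈ X → 0 ≤ v →
      (∀ w ∈ X, w ≤ u → w ≤ v → w ≤ 0) → ∀ t : ℝ, 0 ≤ t →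
      ∀ w ∈ X, w ≤ u → w ≤ t • v → w ≤ 0 := by
    intro u huX hu0 v hvX hv0 hD t ht w hwX hwu hwtv
    rcases eq_or_lt_of_le ht with h | h
    · intro i
      have h1 := hwtv i
      rw [← h] at h1
      simpa using h1
    · set s := max 1 t with hsdef
      have hs1 : 1 ≤ s := le_max_left _ _
      have hst : t ≤ s := le_max_right _ _
      have hspos : (0:ℝ) < s := lt_of_lt_of_le one_pos hs1
      have hw' : s⁻¹ • w ∈ X := Submodule.smul_mem X _ hwX
      have h1 : s⁻¹ • w ≤ u := by
        intro i
        have h2 : w i ≤ s * u i := le_trans (hwu i) (le_mul_of_one_le_left (hu0 i) hs1)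
        calc (s⁻¹ • w) i = s⁻¹ * w i := rfl
          _ ≤ s⁻¹ * (s * u i) := mul_le_mul_of_nonneg_left h2 (inv_nonneg.2 hspos.le)
          _ = u i := by field_simp
      have h2 : s⁻¹ • w ≤ v := by
        intro i
        have h3 : w i ≤ s * v i := by
          have h4 := hwtv i
          have h5 : t * v i ≤ s * v i := mul_le_mul_of_nonneg_right hst (hv0 i)
          calc w i ≤ (t • v) i := h4
            _ = t * v i := rfl
            _ ≤ s * v i := h5
        calc (s⁻¹ • w) i = s⁻¹ * w i := rfl
          _ ≤ s⁻¹ * (s * v i) := mul_le_mul_of_nonneg_left h3 (inv_nonneg.2 hspos.le)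
          _ = v i := by field_simp
      have h3 := hD _ hw' h1 h2
      intro i
      have h4 := h3 i
      have h5 : s⁻¹ * w i ≤ 0 := by simpa using h4
      have h6 : w i = s * (s⁻¹ * w i) := by field_simp
      rw [Pi.zero_apply]
      rw [h6]
      exact mul_nonpos_of_nonneg_of_nonpos hspos.le h5
  have hEX : ∀ e : ↥E, (e : Fin m → ℝ) ∈ X := fun e => (hEB e.2).1
  have hE0' : ∀ e : ↥E, (0 : Fin m → ℝ) ≤ (e : Fin m → ℝ) := fun e => (hEB e.2).2.1
  have hE1 : ∀ e : ↥E, ∑ i, (e : Fin m → ℝ) i = 1 := fun e => (hEB e.2).2.2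
  have hdisj_sum : ∀ u, u ∈ X → 0 ≤ u →
      ∀ (F : Finset ↥E) (c : ↥E → ℝ), (∀ e ∈ F, 0 ≤ c e) →
      (∀ e ∈ F, ∀ w ∈ X, w ≤ u → w ≤ (e : Fin m → ℝ) → w ≤ 0) →
      ∀ w ∈ X, w ≤ u → w ≤ (∑ e ∈ F, c e • (e : Fin m → ℝ)) → w ≤ 0 := by
    intro u huX hu0 F
    induction F using Finset.induction_on with
    | empty =>
      intro c _ _ w hwX hwu hw0
      simpa using hw0
    | @insert a F hnotmem ih =>
      intro c hc hDe w hwX hwu hwsum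
      have haX : (a : Fin m → ℝ) ∈ X := hEX a
      have ha0 : (0 : Fin m → ℝ) ≤ (a : Fin m → ℝ) := hE0' a
      have hsplit : ∑ e ∈ insert a F, c e • (e : Fin m → ℝ)
          = c a • (a : Fin m → ℝ) + ∑ e ∈ F, c e • (e : Fin m → ℝ) :=
        Finset.sum_insert hnotmem
      have h1 : w - c a • (a : Fin m → ℝ) ∈ X :=
        Submodule.sub_mem X hwX (Submodule.smul_mem X _ haX)
      have h2 : w - c a • (a : Fin m → ℝ) ≤ ∑ e ∈ F, c e • (e : Fin m → ℝ) := by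
        intro i
        have h3 := hwsum i
        rw [hsplit] at h3
        simp only [Pi.add_apply, Pi.sub_apply] at h3 ⊢
        linarith
      have h3 : w - c a • (a : Fin m → ℝ) ≤ u := by
        intro i
        have h4 := hwu i
        have h5 : 0 ≤ (c a • (a : Fin m → ℝ)) i :=
          mul_nonneg (hc a (Finset.mem_insert_self a F)) (ha0 i)
        simp only [Pi.sub_apply]
        linarith
      have h6 := ih c (fun e he => hc e (Finset.mem_insert_of_mem he))
        (fun e he => hDe e (Finset.mem_insert_of_mem he)) _ h1 h3 h2
      have h7 : w ≤ c a • (a : Fin m → ℝ) := by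
        intro i
        have := h6 i
        simp only [Pi.sub_apply, Pi.zero_apply] at this ⊢
        linarith
      exact hdisj_smul u huX hu0 _ haX ha0 (hDe a (Finset.mem_insert_self a F))
        (c a) (hc a (Finset.mem_insert_self a F)) w hwX hwu
        (by simpa using h7)
  have hEli : LinearIndependent ℝ (fun e : ↥E => (e : Fin m → ℝ)) := by
    rw [linearIndependent_iff']
    intro F g hg
    have hnoneg : ∀ j ∈ F, 0 ≤ g j := by
      intro j hjF
      by_contra hneg
      push_neg at hneg
      set I := F.filter (fun e => 0 < g e) with hIdef
      set J := F.filter (fun e => g e < 0) with hJdef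
      have hJw : ∑ e ∈ I, g e • (e : Fin m → ℝ) = ∑ e ∈ J, (-(g e)) • (e : Fin m → ℝ) := by
        have h1 : ∑ e ∈ I, g e • (e : Fin m → ℝ)
            + ∑ e ∈ F.filter (fun e => ¬ 0 < g e), g e • (e : Fin m → ℝ) = 0 := by
          rw [hIdef, Finset.sum_filter_add_sum_filter_not]
          exact hg
        have h2 : ∑ e ∈ F.filter (fun e => ¬ 0 < g e), g e • (e : Fin m → ℝ)
            = ∑ e ∈ J, g e • (e : Fin m → ℝ) := by
          symm
          apply Finset.sum_subset
          · intro e he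
            rw [hJdef, Finset.mem_filter] at he
            rw [Finset.mem_filter]
            exact ⟨he.1, by linarith [he.2]⟩
          · intro e he heJ
            rw [Finset.mem_filter] at he
            rw [hJdef, Finset.mem_filter] at heJ
            have hge : g e = 0 := by
              rcases lt_trichotomy (g e) 0 with h | h | h
              · exact absurd ⟨he.1, h⟩ heJ
              · exact h
              · exact absurd h he.2
            rw [hge, zero_smul]
        rw [h2] at h1
        have h3 := eq_neg_of_add_eq_zero_left h1
        rw [h3]
        rw [← Finset.sum_neg_distrib]
        exact Finset.sum_congr rfl fun e _ => (neg_smul _ _).symm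
      have hjJ : j ∈ J := by
        rw [hJdef]
        exact Finset.mem_filter.2 ⟨hjF, hneg⟩
      set t := min (-(g j)) 1 with htdef
      have ht : (0:ℝ) < t := lt_min (by linarith) one_pos
      have htle1 : t ≤ 1 := min_le_right _ _
      have htlegj : t ≤ -(g j) := min_le_left _ _
      have h3 : t • (j : Fin m → ℝ) ≤ (j : Fin m → ℝ) := by
        intro i
        have h0 := hE0' j i
        calc (t • (j : Fin m → ℝ)) i = t * (j : Fin m → ℝ) i := rfl
          _ ≤ 1 * (j : Fin m → ℝ) i := by
              apply mul_le_mul_of_nonneg_right htle1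
              simpa using h0
          _ = (j : Fin m → ℝ) i := one_mul _
      have h4 : t • (j : Fin m → ℝ) ≤ ∑ e ∈ I, g e • (e : Fin m → ℝ) := by
        intro i
        rw [hJw]
        have hterm : ∀ e ∈ J, 0 ≤ ((-(g e)) • (e : Fin m → ℝ)) i := by
          intro e he
          rw [hJdef, Finset.mem_filter] at he
          have := hE0' e i
          exact mul_nonneg (by linarith [he.2]) (by simpa using this)
        have h5 : ((-(g j)) • (j : Fin m → ℝ)) i ≤ (∑ e ∈ J, (-(g e)) • (e : Fin m → ℝ)) i := by
          rw [Finset.sum_apply]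
          exact Finset.single_le_sum hterm hjJ
        have h0 := hE0' j i
        calc (t • (j : Fin m → ℝ)) i = t * (j : Fin m → ℝ) i := rfl
          _ ≤ (-(g j)) * (j : Fin m → ℝ) i := by
              apply mul_le_mul_of_nonneg_right htlegj
              simpa using h0
          _ = ((-(g j)) • (j : Fin m → ℝ)) i := rfl
          _ ≤ _ := h5
      have hDe : ∀ e ∈ I, ∀ w' ∈ X, w' ≤ (j : Fin m → ℝ) → w' ≤ (e : Fin m → ℝ) → w' ≤ 0 := by
        intro e heI w' hw'X hw1 hw2
        have hne : (j : Fin m → ℝ) ≠ (e : Fin m → ℝ) := by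
          intro heq
          have hje : j = e := Subtype.coe_injective heq
          rw [hIdef, Finset.mem_filter] at heI
          rw [hje] at hneg
          linarith [heI.2]
        exact hdisj _ j.2 _ e.2 hne w' hw'X hw1 hw2
      have h6 := hdisj_sum (j : Fin m → ℝ) (hEX j) (hE0' j) I g
        (fun e he => le_of_lt (by rw [hIdef, Finset.mem_filter] at he; exact he.2)) hDe
        (t • (j : Fin m → ℝ)) (Submodule.smul_mem X _ (hEX j)) h3 h4
      have h7 : (j : Fin m → ℝ) = 0 := by
        funext i
        have h8 := h6 i
        have h9 : t * (j : Fin m → ℝ) i ≤ 0 := by simpa using h8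
        have h0 := hE0' j i
        have h0' : 0 ≤ (j : Fin m → ℝ) i := by simpa using h0
        rw [Pi.zero_apply]
        nlinarith
      have h10 := hE1 j
      rw [h7] at h10
      simp at h10
    have htot : ∑ e ∈ F, g e = 0 := by
      have h0 : ∑ i, (∑ e ∈ F, g e • (e : Fin m → ℝ)) i = 0 := by rw [hg]; simp
      have h1 : ∑ i, (∑ e ∈ F, g e • (e : Fin m → ℝ)) i
          = ∑ e ∈ F, g e * (∑ i, (e : Fin m → ℝ) i) := by
        calc ∑ i, (∑ e ∈ F, g e • (e : Fin m → ℝ)) i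
            = ∑ i, ∑ e ∈ F, g e * (e : Fin m → ℝ) i := by
              refine Finset.sum_congr rfl fun i _ => ?_
              rw [Finset.sum_apply]
              rfl
          _ = ∑ e ∈ F, ∑ i, g e * (e : Fin m → ℝ) i := Finset.sum_comm
          _ = ∑ e ∈ F, g e * (∑ i, (e : Fin m → ℝ) i) := by
              refine Finset.sum_congr rfl fun e _ => ?_
              rw [Finset.mul_sum]
      rw [h1] at h0
      calc ∑ e ∈ F, g e = ∑ e ∈ F, g e * (∑ i, (e : Fin m → ℝ) i) := by
            refine Finset.sum_congr rfl fun e _ => ?_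
            rw [hE1 e, mul_one]
        _ = 0 := h0
    intro e heF
    exact (Finset.sum_eq_zero_iff_of_nonneg hnoneg).1 htot e heF
  have hEfin : E.Finite := LinearIndependent.setFinite hEli
  have hBE : B = convexHull ℝ E := by
    have h1 := closure_convexHull_extremePoints hBcompact hBconv
    rw [IsClosed.closure_eq (hEfin.isClosed_convexHull ℝ)] at h1
    exact h1.symm
  have hspanE : Submodule.span ℝ E = X := by
    apply le_antisymm
    · rw [Submodule.span_le]
      exact fun e he => (hEB he).1
    · intro x hxX
      have hcone : ∀ v, v ∈ X → 0 ≤ v → v ∈ Submodule.span ℝ E := by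
        intro v hvX hv0
        by_cases hv : v = 0
        · rw [hv]; exact Submodule.zero_mem _
        · obtain ⟨hvpos, hvB⟩ := hnorm v hvX hv0 hv
          have h2 : (∑ i, v i)⁻¹ • v ∈ Submodule.span ℝ E := by
            rw [hBE] at hvB
            exact convexHull_min Submodule.subset_span (Submodule.span ℝ E).convex hvB
          have h3 := Submodule.smul_mem (Submodule.span ℝ E) (∑ i, v i) h2
          rw [smul_smul, mul_inv_cancel₀ hvpos.ne', one_smul] at h3
          exact h3
      obtain ⟨⟨zz, hzzX, hxzz, h0zz, -⟩, -⟩ := hlat x hxX 0 (Submodule.zero_mem X)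
      have h4 : zz - x ∈ X := Submodule.sub_mem X hzzX hxX
      have h5 : (0 : Fin m → ℝ) ≤ zz - x := fun i => by simpa using hxzz i
      have h6 := Submodule.sub_mem (Submodule.span ℝ E) (hcone zz hzzX h0zz) (hcone _ h4 h5)
      rw [sub_sub_cancel] at h6
      exact h6
  have hfinrank : Module.finrank ℝ ↥X = r := by
    rw [hX, finrank_span_eq_card hind, Fintype.card_fin]
  haveI : Fintype ↥E := hEfin.fintype
  set u' : ↥E → ↥X := fun e => ⟨(e : Fin m → ℝ), (hEB e.2).1⟩ with hu'def
  have hu'li : LinearIndependent ℝ u' := by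
    apply LinearIndependent.of_comp X.subtype
    exact hEli
  have hu'span : ⊤ ≤ Submodule.span ℝ (Set.range u') := by
    have h1 : Submodule.map X.subtype (Submodule.span ℝ (Set.range u')) = X := by
      rw [Submodule.map_span]
      have h2 : X.subtype '' Set.range u' = E := by
        ext v
        constructor
        · rintro ⟨w, ⟨e, rfl⟩, rfl⟩
          exact e.2
        · intro hv
          exact ⟨u' ⟨v, hv⟩, ⟨⟨v, hv⟩, rfl⟩, rfl⟩
      rw [h2, hspanE]
    have h2 : Submodule.map X.subtype (⊤ : Submodule ℝ ↥X) = X := by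
      rw [Submodule.map_top, Submodule.range_subtype]
    have h3 : Submodule.span ℝ (Set.range u') = ⊤ :=
      Submodule.map_injective_of_injective (Submodule.injective_subtype X)
        (h1.trans h2.symm)
    rw [h3]
  have hcard : Fintype.card ↥E = r :=
    ((Module.finrank_eq_card_basis (Module.Basis.mk hu'li hu'span)).symm).trans hfinrank
  let equiv : Fin r ≃ ↥E := (Fintype.equivFinOfCardEq hcard).symm
  set b : Fin r → Fin m → ℝ := fun k => ((equiv k : ↥E) : Fin m → ℝ) with hbdef
  have hrange : Set.range b = E := by
    ext v
    constructor
    · rintro ⟨k, rfl⟩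
      exact (equiv k).2
    · intro hv
      refine ⟨equiv.symm ⟨v, hv⟩, ?_⟩
      rw [hbdef]
      simp
  refine ⟨b, ?_, ?_, ?_⟩
  · exact hEli.comp equiv equiv.injective
  · rw [hrange, hspanE]
  · ext x
    simp only [Set.mem_setOf_eq]
    constructor
    · rintro ⟨hxX, hx0⟩
      by_cases hx : x = 0
      · refine ⟨0, fun i => le_refl 0, ?_⟩
        rw [hx]
        simp
      · obtain ⟨hxpos, hxB⟩ := hnorm x hxX hx0 hx
        rw [hBE, ← hrange] at hxB
        obtain ⟨θ, hθ0, hθ1, hθx⟩ := mem_convexHull_range_decomp b hxB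
        refine ⟨fun k => (∑ i, x i) * θ k, fun k => mul_nonneg hxpos.le (hθ0 k), ?_⟩
        have h1 : x = (∑ i, x i) • ((∑ i, x i)⁻¹ • x) := by
          rw [smul_smul, mul_inv_cancel₀ hxpos.ne', one_smul]
        conv_lhs => rw [h1]
        rw [hθx, Finset.smul_sum]
        exact Finset.sum_congr rfl fun k _ => (smul_smul _ _ _)
    · rintro ⟨c, hc0, rfl⟩
      constructor
      · exact Submodule.sum_mem _ fun k _ =>
          Submodule.smul_mem _ _ ((hEB (equiv k).2).1)
      · intro i
        rw [Pi.zero_apply, sum_apply']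
        refine Finset.sum_nonneg fun k _ => mul_nonneg (hc0 k) ?_
        have := (hEB (equiv k).2).2.1 i
        simpa using this


end Helpers

theorem span_latticeSubspace_iff_polytope_r_vertices {m r : ℕ}
    (z : Fin r → Fin m → ℝ) (hpos : ∀ k i, 0 ≤ z k i)
    (hsum : ∀ i, 0 < ∑ k, z k i) (hind : LinearIndependent ℝ z)
    (β : Fin m → Fin r → ℝ) (hβ : ∀ i k, β i k = z k i / ∑ k', z k' i)
    (X : Submodule ℝ (Fin m → ℝ)) (hX : X = Submodule.span ℝ (Set.range z)) :
    (IsLatticeSubspace X ↔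
      ((convexHull ℝ (Set.range β)).extremePoints ℝ).ncard = r) ∧
    (∀ P : Fin r → Fin r → ℝ, Function.Injective P →
      Set.range P = (convexHull ℝ (Set.range β)).extremePoints ℝ →
      IsPositiveBasis X
        (fun k => (((Matrix.of fun s t => P t s)⁻¹ : Matrix (Fin r) (Fin r) ℝ) *
          (Matrix.of fun s => z s : Matrix (Fin r) (Fin m) ℝ)) k)) := by
  constructor
  · constructor
    · intro hlat
      obtain ⟨b, hb⟩ := exists_positiveBasis_of_lattice z hind X hX hlat
      exact ncard_extremePoints_of_positiveBasis z hpos hsum hind β hβ X hX b hb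
    · intro hncard
      have hEfin : ((convexHull ℝ (Set.range β)).extremePoints ℝ).Finite :=
        (Set.finite_range β).subset extremePoints_convexHull_subset
      haveI : Fintype ↥((convexHull ℝ (Set.range β)).extremePoints ℝ) := hEfin.fintype
      have hcard : Fintype.card ↥((convexHull ℝ (Set.range β)).extremePoints ℝ) = r := by
        rw [← Nat.card_eq_fintype_card, Nat.card_coe_set_eq]
        exact hncard
      let equiv : Fin r ≃ ↥((convexHull ℝ (Set.range β)).extremePoints ℝ) :=
        (Fintype.equivFinOfCardEq hcard).symm
      set P : Fin r → Fin r → ℝ := fun k => ((equiv k : _) : Fin r → ℝ) with hPdef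
      have hPrange : Set.range P = (convexHull ℝ (Set.range β)).extremePoints ℝ := by
        ext v
        constructor
        · rintro ⟨k, rfl⟩
          exact (equiv k).2
        · intro hv
          refine ⟨equiv.symm ⟨v, hv⟩, ?_⟩
          rw [hPdef]
          simp
      exact latticeOfPositiveBasis (positiveBasis_of_P z hpos hsum hind β hβ X hX P hPrange)
  · intro P hPinj hPrange
    exact positiveBasis_of_P z hpos hsum hind β hβ X hX P hPrange
end

section
/- If Z is a minimal lattice-subspace of ℝ^m containing linearly independent vectors y_1,...,y_r ∈ ℝ^m_+ and {b_1,...,b_d} is a positive basis of Z, then this basis has a set of nodes: there exist indices i_1,...,i_d such that b_k(i_k) > 0 and b_j(i_k) = 0 for all j ≠ k. -/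
/-!
If the support of `b k` were covered by the supports of the other basis vectors, then for small
`ε > 0` the vector `∑_{j ≠ k} b j - ε • b k` would be a nonnegative element of `X`. Its unique
expansion in the basis `b` has the negative coefficient `-ε` at `k`, contradicting the fact that
the nonnegative elements of `X` are exactly the nonnegative combinations of the `b j`.
-/

open Filter Topology

theorem exists_pos_smul_le {ι : Type*} [Finite ι] {u v : ι → ℝ} (hu : 0 ≤ u)
    (hsupp : ∀ i, 0 < v i → 0 < u i) : ∃ ε : ℝ, 0 < ε ∧ ε • v ≤ u := by
  have hsmall : ∀ i, ∀ᶠ ε in 𝓝[>] (0 : ℝ), ε * v i ≤ u i := by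
    intro i
    rcases le_or_gt (v i) 0 with hvi | hvi
    · filter_upwards [self_mem_nhdsWithin] with ε (hε : 0 < ε)
      exact (mul_nonpos_of_nonneg_of_nonpos hε.le hvi).trans (hu i)
    · have hlim : Tendsto (fun ε => ε * v i) (𝓝[>] 0) (𝓝 0) :=
        ((continuous_mul_const (v i)).tendsto' 0 0 (zero_mul _)).mono_left nhdsWithin_le_nhds
      exact (hlim.eventually (ge_mem_nhds (hsupp i hvi))).mono fun _ h => h
  obtain ⟨ε, hε, hle⟩ :=
    ((eventually_all.2 hsmall).and self_mem_nhdsWithin).exists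
  exact ⟨ε, hle, fun i => hε i⟩

namespace IsPositiveBasis

variable {m r : ℕ} {X : Submodule ℝ (Fin m → ℝ)} {b : Fin r → Fin m → ℝ}

theorem mem (hb : IsPositiveBasis X b) (j : Fin r) : b j ∈ X :=
  hb.2.1 ▸ Submodule.subset_span ⟨j, rfl⟩

theorem nonneg (hb : IsPositiveBasis X b) (j : Fin r) : 0 ≤ b j := by
  have hcomb : b j ∈ {x : Fin m → ℝ | ∃ c : Fin r → ℝ, (∀ i, 0 ≤ c i) ∧ x = ∑ i, c i • b i} :=
    ⟨Pi.single j 1, fun i => by by_cases h : i = j <;> simp [h], by simp [Pi.single_apply]⟩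
  rw [← hb.2.2] at hcomb
  exact hcomb.2

theorem coeff_nonneg (hb : IsPositiveBasis X b) {c : Fin r → ℝ}
    (hc : 0 ≤ ∑ i, c i • b i) (i : Fin r) : 0 ≤ c i := by
  have hX : ∑ i, c i • b i ∈ X := X.sum_mem fun j _ => X.smul_mem _ (hb.mem j)
  obtain ⟨c', hc', heq⟩ : ∑ i, c i • b i ∈
      {x : Fin m → ℝ | ∃ c : Fin r → ℝ, (∀ i, 0 ≤ c i) ∧ x = ∑ i, c i • b i} :=
    hb.2.2 ▸ ⟨hX, hc⟩
  exact Fintype.linearIndependent_iffₛ.1 hb.1 c c' heq i ▸ hc' i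

theorem exists_node (hb : IsPositiveBasis X b) (k : Fin r) :
    ∃ i, 0 < b k i ∧ ∀ j, j ≠ k → b j i = 0 := by
  by_contra! hcover
  set u := ∑ j ∈ Finset.univ.erase k, b j
  have hu : 0 ≤ u := Finset.sum_nonneg fun j _ => hb.nonneg j
  have hsupp : ∀ i, 0 < b k i → 0 < u i := by
    intro i hki
    obtain ⟨j, hjk, hji⟩ := hcover i hki
    show 0 < (∑ j ∈ Finset.univ.erase k, b j) i
    rw [Finset.sum_apply]
    exact Finset.sum_pos' (fun l _ => hb.nonneg l i)
      ⟨j, Finset.mem_erase.2 ⟨hjk, Finset.mem_univ j⟩, (hb.nonneg j i).lt_of_ne' hji⟩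
  obtain ⟨ε, hε, hle⟩ := exists_pos_smul_le hu hsupp
  set c : Fin r → ℝ := Function.update 1 k (-ε)
  have hexpand : ∑ j, c j • b j = u - ε • b k := by
    rw [← Finset.add_sum_erase _ _ (Finset.mem_univ k), sub_eq_neg_add, ← neg_smul]
    congr 1
    · simp [c]
    · refine Finset.sum_congr rfl fun j hj => ?_
      simp [c, Finset.ne_of_mem_erase hj]
  have hck := hb.coeff_nonneg (hexpand ▸ sub_nonneg.2 hle) k
  simp only [c, Function.update_self] at hck
  linarith

end IsPositiveBasis

theorem positiveBasis_of_minimal_latticeSubspace_has_nodes_general {m d : ℕ}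
    (Z : Submodule ℝ (Fin m → ℝ))
    (b : Fin d → Fin m → ℝ) (hb : IsPositiveBasis Z b) :
    ∃ node : Fin d → Fin m, ∀ k : Fin d,
      0 < b k (node k) ∧ ∀ j : Fin d, j ≠ k → b j (node k) = 0 := by
  choose node hnode using hb.exists_node
  exact ⟨node, hnode⟩

/-- A positive basis of a minimal lattice-subspace containing finitely many
linearly independent nonnegative vectors is a basis with nodes. -/
theorem positiveBasis_of_minimal_latticeSubspace_has_nodes {m r d : ℕ}
    (y : Fin r → Fin m → ℝ) (hpos : ∀ k, 0 ≤ y k) (hind : LinearIndependent ℝ y)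
    (Z : Submodule ℝ (Fin m → ℝ)) (hZlat : IsLatticeSubspace Z)
    (hZy : ∀ k, y k ∈ Z)
    (hZmin : ∀ W : Submodule ℝ (Fin m → ℝ), W ≤ Z → IsLatticeSubspace W →
      (∀ k, y k ∈ W) → W = Z)
    (b : Fin d → Fin m → ℝ) (hb : IsPositiveBasis Z b) :
    ∃ node : Fin d → Fin m, ∀ k : Fin d,
      0 < b k (node k) ∧ ∀ j : Fin d, j ≠ k → b j (node k) = 0 :=
  positiveBasis_of_minimal_latticeSubspace_has_nodes_general Z b hb
end

section
/- Let A be a nonnegative n×m matrix without zero columns, y_1,...,y_r a maximal linearly independent set of rows of A, β the basic function of y_1,...,y_r, and K the convex hull of the range of β. Then the set of vertices of K contains a subset of r linearly independent vectors; in particular r ≤ d ≤ m, where d is the number of vertices of K. -/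
theorem vertices_contain_linearly_independent {n m r : ℕ}
    (A : Matrix (Fin n) (Fin m) ℝ) (hA : ∀ i j, 0 ≤ A i j)
    (y : Fin r → Fin m → ℝ) (hrows : ∀ k, ∃ i, y k = A i)
    (hind : LinearIndependent ℝ y)
    (hmax : ∀ i, A i ∈ Submodule.span ℝ (Set.range y))
    (hsum : ∀ i, 0 < ∑ k, y k i)
    (β : Fin m → Fin r → ℝ) (hβ : ∀ i k, β i k = y k i / ∑ k', y k' i)
    (E : Set (Fin r → ℝ))
    (hE : E = (convexHull ℝ (Set.range β)).extremePoints ℝ) :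
    (∃ s : Set (Fin r → ℝ), s ⊆ E ∧ s.ncard = r ∧
      LinearIndependent ℝ ((↑) : s → (Fin r → ℝ))) ∧
    r ≤ E.ncard ∧ E.ncard ≤ m := by
  classical
  -- the matrix whose rows (indexed by Fin m) are the β i
  set M : Matrix (Fin r) (Fin m) ℝ := Matrix.of fun k i => β i k with hM
  -- Step 1: span of range β is ⊤
  have hMT : M.transpose = Matrix.of β := by
    ext i k; rfl
  have hinj : Function.Injective (M.transpose.mulVec) := by
    rw [Matrix.mulVec_injective_iff]
    have : (fun k => M.transpose.transpose k) = fun k i => β i k := by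
      ext k i; rfl
    show LinearIndependent ℝ (fun k i => β i k)
    rw [Fintype.linearIndependent_iff]
    intro c hc k
    have hy : ∀ i, ∑ k', c k' * y k' i = 0 := by
      intro i
      have h1 : ∑ k', c k' * β i k' = 0 := by
        simpa using congrFun hc i
      have h2 : ∑ k', c k' * y k' i = (∑ k', y k' i) * ∑ k', c k' * β i k' := by
        rw [Finset.mul_sum]
        apply Finset.sum_congr rfl
        intro k' _
        have hS : (∑ k'', y k'' i) ≠ 0 := (hsum i).ne'
        rw [hβ]
        field_simp
      rw [h2, h1, mul_zero]
    have := Fintype.linearIndependent_iff.mp hind c ?_ k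
    · exact this
    · ext i
      simp only [Finset.sum_apply, Pi.smul_apply, smul_eq_mul, Pi.zero_apply]
      exact hy i
  have hrankMT : (M.transpose).rank = r := by
    rw [Matrix.rank]
    have : Function.Injective (M.transpose.mulVecLin) := hinj
    rw [LinearMap.finrank_range_of_inj this, Module.finrank_pi]
    simp
  have hspan : Submodule.span ℝ (Set.range β) = ⊤ := by
    have hrange : Set.range β = Set.range M.transpose := by rw [hMT]; rfl
    apply Submodule.eq_top_of_finrank_eq
    rw [show Set.range β = Set.range M.col from rfl, ← Matrix.range_mulVecLin, ← Matrix.rank, ← Matrix.rank_transpose, hrankMT,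
      Module.finrank_pi]
    simp
  -- Step 2: basic facts about E
  have hfin : (Set.range β).Finite := Set.finite_range β
  have hEsub : E ⊆ Set.range β := by
    rw [hE]; exact extremePoints_convexHull_subset
  have hEfin : E.Finite := hfin.subset hEsub
  -- Step 3: convexHull E = convexHull (range β)  (Krein–Milman / Minkowski)
  have hK : IsCompact (convexHull ℝ (Set.range β)) := hfin.isCompact_convexHull (𝕜 := ℝ)
  have hconv : Convex ℝ (convexHull ℝ (Set.range β)) := convex_convexHull ℝ _
  have hKM : closure (convexHull ℝ E) = convexHull ℝ (Set.range β) := by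
    rw [hE]; exact closure_convexHull_extremePoints hK hconv
  have hclosed : IsClosed (convexHull ℝ E) := (hEfin.isCompact_convexHull (𝕜 := ℝ)).isClosed
  have hhull : convexHull ℝ E = convexHull ℝ (Set.range β) := by
    rw [← hKM, hclosed.closure_eq]
  -- Step 4: span E = ⊤
  have hspanE : Submodule.span ℝ E = ⊤ := by
    rw [eq_top_iff, ← hspan]
    apply Submodule.span_le.mpr
    intro x hx
    have hx' : x ∈ convexHull ℝ E := by
      rw [hhull]; exact subset_convexHull ℝ _ hx
    have : convexHull ℝ E ⊆ (Submodule.span ℝ E : Set (Fin r → ℝ)) :=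
      convexHull_min Submodule.subset_span (Submodule.span ℝ E).convex
    exact this hx'
  -- Step 5: extract a linearly independent spanning subset
  obtain ⟨b, hbE, hbspan, hbind⟩ := exists_linearIndependent ℝ E
  have hbfin : b.Finite := hEfin.subset hbE
  have hbcard : b.ncard = r := by
    have : Fintype b := hbfin.fintype
    have h1 : Module.finrank ℝ (Submodule.span ℝ b) = b.toFinset.card :=
      finrank_span_set_eq_card hbind
    rw [hbspan, hspanE] at h1
    have h2 : Module.finrank ℝ (⊤ : Submodule ℝ (Fin r → ℝ)) = r := by
      rw [finrank_top, Module.finrank_pi]; simp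
    rw [Set.ncard_eq_toFinset_card' b]
    omega
  refine ⟨⟨b, hbE, hbcard, hbind⟩, ?_, ?_⟩
  · have := Set.ncard_le_ncard hbE hEfin
    omega
  · calc E.ncard ≤ (Set.range β).ncard := Set.ncard_le_ncard hEsub hfin
      _ = (β '' Set.univ).ncard := by rw [Set.image_univ]
      _ ≤ (Set.univ : Set (Fin m)).ncard := Set.ncard_image_le Set.finite_univ
      _ = m := by rw [Set.ncard_univ]; simp
end
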